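/- arXiv:2601.15684 — 9 statements merged into one kernel-verified Lean document; each statement's English description precedes it below -/
import Mathlib

section
/- A point x* with ‖x*‖ = Δ is a global solution of the spherically constrained problem min gᵀx + ½ xᵀAx subject to ‖x‖ = Δ if and only if there exists a real number λ* such that (A + λ* I) x* = −g and A + λ* I is positive semidefinite. -/
open Matrix

private lemma dot_self_nonneg' {n : ℕ} (v : Fin n → ℝ) : 0 ≤ v ⬝ᵥ v :=
  Finset.sum_nonneg fun i _ => mul_self_nonneg _

private lemma symm_dot' {n : ℕ} {B : Matrix (Fin n) (Fin n) ℝ} (hB : B.IsSymm)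
    (u v : Fin n → ℝ) : u ⬝ᵥ (B *ᵥ v) = v ⬝ᵥ (B *ᵥ u) := by
  rw [dotProduct_mulVec, show u ᵥ* B = B *ᵥ u from by nth_rewrite 1 [← hB.eq]; exact vecMul_transpose B u,
    dotProduct_comm]

private lemma key_identity' {n : ℕ} (A : Matrix (Fin n) (Fin n) ℝ) (hA : A.IsSymm) (lam : ℝ)
    (g x y : Fin n → ℝ)
    (hg : (A + lam • (1 : Matrix (Fin n) (Fin n) ℝ)) *ᵥ x = -g)
    (hyy : y ⬝ᵥ y = x ⬝ᵥ x) :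
    (g ⬝ᵥ y + (1/2) * (y ⬝ᵥ (A *ᵥ y))) - (g ⬝ᵥ x + (1/2) * (x ⬝ᵥ (A *ᵥ x)))
      = (1/2) * ((y - x) ⬝ᵥ ((A + lam • (1 : Matrix (Fin n) (Fin n) ℝ)) *ᵥ (y - x))) := by
  set B := A + lam • (1 : Matrix (Fin n) (Fin n) ℝ) with hBdef
  have hBsymm : B.IsSymm := by
    unfold Matrix.IsSymm
    rw [hBdef, transpose_add, transpose_smul, transpose_one, hA.eq]
  have hAv : ∀ v : Fin n → ℝ, A *ᵥ v = B *ᵥ v - lam • v := by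
    intro v
    rw [hBdef, add_mulVec, smul_mulVec, one_mulVec]
    abel
  have hgy : ∀ v : Fin n → ℝ, g ⬝ᵥ v = -(x ⬝ᵥ (B *ᵥ v)) := by
    intro v
    have : g = -(B *ᵥ x) := by rw [hg]; simp
    rw [this, neg_dotProduct, symm_dot' hBsymm x v, dotProduct_comm]
  have e1 : y ⬝ᵥ (A *ᵥ y) = y ⬝ᵥ (B *ᵥ y) - lam * (y ⬝ᵥ y) := by
    rw [hAv, dotProduct_sub, dotProduct_smul, smul_eq_mul]
  have e2 : x ⬝ᵥ (A *ᵥ x) = x ⬝ᵥ (B *ᵥ x) - lam * (x ⬝ᵥ x) := by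
    rw [hAv, dotProduct_sub, dotProduct_smul, smul_eq_mul]
  have e3 : (y - x) ⬝ᵥ (B *ᵥ (y - x))
      = y ⬝ᵥ (B *ᵥ y) - 2 * (x ⬝ᵥ (B *ᵥ y)) + x ⬝ᵥ (B *ᵥ x) := by
    rw [mulVec_sub, dotProduct_sub, sub_dotProduct, sub_dotProduct,
      symm_dot' hBsymm y x]
    ring
  rw [hgy y, hgy x, e1, e2, e3, hyy]
  ring

set_option maxHeartbeats 1000000 in
/-- Global optimality characterization for the spherically constrained problem
`min gᵀx + ½ xᵀAx  s.t. ‖x‖ = Δ`:  a feasible `x*` is a global solution iff there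
exists `λ*` with `(A + λ* I) x* = −g` and `A + λ* I ⪰ 0`. -/
theorem stmt3 (n : ℕ) (hn : 1 ≤ n) (A : Matrix (Fin n) (Fin n) ℝ) (hA : A.IsSymm)
    (g : Fin n → ℝ) (Δ : ℝ) (hΔ : 0 < Δ)
    (x : Fin n → ℝ) (hx : Real.sqrt (x ⬝ᵥ x) = Δ) :
    (∀ y : Fin n → ℝ, Real.sqrt (y ⬝ᵥ y) = Δ →
        g ⬝ᵥ x + (1 / 2) * (x ⬝ᵥ (A *ᵥ x)) ≤ g ⬝ᵥ y + (1 / 2) * (y ⬝ᵥ (A *ᵥ y))) ↔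
      ∃ lam : ℝ, (A + lam • (1 : Matrix (Fin n) (Fin n) ℝ)) *ᵥ x = -g ∧
        (A + lam • (1 : Matrix (Fin n) (Fin n) ℝ)).PosSemidef := by
  have hxx : x ⬝ᵥ x = Δ ^ 2 := by
    rw [← hx, Real.sq_sqrt (dot_self_nonneg' x)]
  have feas : ∀ y : Fin n → ℝ, y ⬝ᵥ y = Δ ^ 2 → Real.sqrt (y ⬝ᵥ y) = Δ := by
    intro y hy; rw [hy, Real.sqrt_sq hΔ.le]
  constructor
  · -- hard direction
    intro hopt
    have step1 : ∀ d : Fin n → ℝ, d ⬝ᵥ x = 0 → d ⬝ᵥ d = Δ ^ 2 →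
        g ⬝ᵥ d + x ⬝ᵥ (A *ᵥ d) = 0 := by
      intro d hdx hdd
      set gx := g ⬝ᵥ x with hgx
      set gd := g ⬝ᵥ d with hgd
      set xAx := x ⬝ᵥ (A *ᵥ x) with hxAx
      set xAd := x ⬝ᵥ (A *ᵥ d) with hxAd
      set dAd := d ⬝ᵥ (A *ᵥ d) with hdAd
      set f : ℝ → ℝ := fun s => Real.sqrt (1 - s ^ 2) * gx + s * gd
        + (1 - s ^ 2) / 2 * xAx + Real.sqrt (1 - s ^ 2) * s * xAd + s ^ 2 / 2 * dAd with hf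
      have hf0 : f 0 = gx + (1/2) * xAx := by norm_num [hf]
      have hmono : ∀ s ∈ Set.Ioo (-1 : ℝ) 1, f 0 ≤ f s := by
        intro s hs
        have hs2 : 0 ≤ 1 - s ^ 2 := by nlinarith [hs.1, hs.2]
        set c := Real.sqrt (1 - s ^ 2) with hc
        have hc2 : c ^ 2 = 1 - s ^ 2 := Real.sq_sqrt hs2
        set y := c • x + s • d with hy
        have hyAy : A *ᵥ y = c • (A *ᵥ x) + s • (A *ᵥ d) := by
          rw [hy, mulVec_add, mulVec_smul, mulVec_smul]
        have hxd : x ⬝ᵥ d = 0 := by rw [dotProduct_comm]; exact hdx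
        have hdAx : d ⬝ᵥ (A *ᵥ x) = xAd := symm_dot' hA d x
        have hyy : y ⬝ᵥ y = Δ ^ 2 := by
          rw [hy]
          simp only [dotProduct_add, add_dotProduct, dotProduct_smul, smul_dotProduct,
            smul_eq_mul]
          rw [hxd, hdx, hxx, hdd]
          linear_combination (Δ ^ 2) * hc2
        have := hopt y (feas y hyy)
        have hgy : g ⬝ᵥ y = c * gx + s * gd := by
          rw [hy, dotProduct_add, dotProduct_smul, dotProduct_smul, smul_eq_mul, smul_eq_mul]
        have hyAy2 : y ⬝ᵥ (A *ᵥ y) = (1 - s ^ 2) * xAx + 2 * (c * s) * xAd + s ^ 2 * dAd := by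
          rw [hy, hyAy]
          simp only [dotProduct_add, add_dotProduct, dotProduct_smul, smul_dotProduct,
            smul_eq_mul]
          rw [hdAx, ← hxAx, ← hxAd, ← hdAd]
          linear_combination xAx * hc2
        rw [hgy, hyAy2] at this
        rw [hf0, hf]
        simp only
        nlinarith [this]
      have hlocmin : IsLocalMin f 0 := by
        have hmem : Set.Ioo (-1 : ℝ) 1 ∈ nhds (0 : ℝ) :=
          Ioo_mem_nhds (by norm_num) (by norm_num)
        exact Filter.eventually_of_mem hmem hmono
      have h1 : HasDerivAt (fun s : ℝ => 1 - s ^ 2) 0 0 := by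
        have := (hasDerivAt_pow 2 (0 : ℝ)).const_sub 1
        simpa using this
      have hc : HasDerivAt (fun s : ℝ => Real.sqrt (1 - s ^ 2)) 0 0 := by
        have := h1.sqrt (by norm_num)
        simpa using this
      have hder : HasDerivAt f (gd + xAd) 0 := by
        have h2 := hc.mul_const gx
        have h3 := (hasDerivAt_id (0 : ℝ)).mul_const gd
        have h4 := (h1.div_const 2).mul_const xAx
        have h5 := (hc.mul (hasDerivAt_id (0 : ℝ))).mul_const xAd
        have h6 := ((hasDerivAt_pow 2 (0 : ℝ)).div_const 2).mul_const dAd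
        have := (((h2.add h3).add h4).add h5).add h6
        simp only [zero_mul, one_mul, add_zero, zero_add, mul_zero, id_eq, mul_one,
          zero_div, zero_pow, Real.sqrt_one] at this
        refine this.congr_deriv ?_
        norm_num [Real.sqrt_one]
      have := hlocmin.hasDerivAt_eq_zero hder
      linarith [this]
    -- Step 2: extend to all orthogonal directions
    have step2 : ∀ d : Fin n → ℝ, d ⬝ᵥ x = 0 → (g + A *ᵥ x) ⬝ᵥ d = 0 := by
      intro d hdx
      by_cases hd0 : d = 0
      · simp [hd0]
      · have hdd : 0 < d ⬝ᵥ d :=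
          lt_of_le_of_ne (dot_self_nonneg' d) (fun h => hd0 (dotProduct_self_eq_zero.mp h.symm))
        set t := Δ / Real.sqrt (d ⬝ᵥ d) with ht
        have hst : Real.sqrt (d ⬝ᵥ d) > 0 := Real.sqrt_pos.mpr hdd
        have ht0 : t ≠ 0 := div_ne_zero hΔ.ne' hst.ne'
        have h1 : (t • d) ⬝ᵥ x = 0 := by rw [smul_dotProduct, hdx, smul_zero]
        have ht2 : t ^ 2 = Δ ^ 2 / (d ⬝ᵥ d) := by rw [ht, div_pow, Real.sq_sqrt hdd.le]
        have h2 : (t • d) ⬝ᵥ (t • d) = Δ ^ 2 := by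
          rw [smul_dotProduct, dotProduct_smul, smul_eq_mul, smul_eq_mul,
            show t * (t * (d ⬝ᵥ d)) = t ^ 2 * (d ⬝ᵥ d) from by ring, ht2]
          field_simp
        have h3 := step1 (t • d) h1 h2
        rw [mulVec_smul, dotProduct_smul, dotProduct_smul, smul_eq_mul, smul_eq_mul] at h3
        rw [add_dotProduct, dotProduct_comm (A *ᵥ x) d, symm_dot' hA d x]
        have h4 : t * (g ⬝ᵥ d + x ⬝ᵥ (A *ᵥ d)) = 0 := by rw [mul_add]; linarith [h3]
        rcases mul_eq_zero.mp h4 with h | h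
        · exact absurd h ht0
        · exact h
    -- Step 3: construct lam
    have hΔ2 : (Δ : ℝ) ^ 2 ≠ 0 := pow_ne_zero 2 hΔ.ne'
    set v := g + A *ᵥ x with hv
    set cc := (v ⬝ᵥ x) / Δ ^ 2 with hcc
    have hd : (v - cc • x) ⬝ᵥ x = 0 := by
      rw [sub_dotProduct, smul_dotProduct, smul_eq_mul, hcc, hxx]
      field_simp
      ring
    have hvd : v ⬝ᵥ (v - cc • x) = 0 := step2 (v - cc • x) hd
    have hdd0 : (v - cc • x) ⬝ᵥ (v - cc • x) = 0 := by
      have e1 : (v - cc • x) ⬝ᵥ v = 0 := by rw [dotProduct_comm]; exact hvd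
      have e2 : (v - cc • x) ⬝ᵥ (cc • x) = 0 := by
        rw [dotProduct_smul, smul_eq_mul, show (v - cc • x) ⬝ᵥ x = 0 from hd, mul_zero]
      rw [dotProduct_sub, e1, e2, sub_zero]
    have hveq : v = cc • x := sub_eq_zero.mp (dotProduct_self_eq_zero.mp hdd0)
    have hBx : (A + (-cc) • (1 : Matrix (Fin n) (Fin n) ℝ)) *ᵥ x = -g := by
      rw [add_mulVec, smul_mulVec, one_mulVec]
      have hAx : A *ᵥ x = cc • x - g := by
        rw [← hveq, hv]; abel
      rw [hAx]
      funext i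
      simp only [Pi.add_apply, Pi.sub_apply, Pi.smul_apply, Pi.neg_apply, smul_eq_mul,
        neg_mul]
      ring
    refine ⟨-cc, hBx, ?_⟩
    set B := A + (-cc) • (1 : Matrix (Fin n) (Fin n) ℝ) with hB
    have hBsymm : B.IsSymm := by
      unfold Matrix.IsSymm
      rw [hB, transpose_add, transpose_smul, transpose_one, hA.eq]
    have key : ∀ y : Fin n → ℝ, y ⬝ᵥ y = Δ ^ 2 → 0 ≤ (y - x) ⬝ᵥ (B *ᵥ (y - x)) := by
      intro y hyy
      have hid := key_identity' A hA (-cc) g x y hBx (by rw [hyy, hxx])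
      have hle := hopt y (feas y hyy)
      rw [← hB] at hid
      linarith [hid, hle]
    have claim1 : ∀ w : Fin n → ℝ, w ⬝ᵥ x ≠ 0 → 0 ≤ w ⬝ᵥ (B *ᵥ w) := by
      intro w hwx
      have hw0 : w ≠ 0 := fun h => hwx (by simp [h])
      have hww : 0 < w ⬝ᵥ w :=
        lt_of_le_of_ne (dot_self_nonneg' w) (fun h => hw0 (dotProduct_self_eq_zero.mp h.symm))
      set t := -2 * (x ⬝ᵥ w) / (w ⬝ᵥ w) with htdef
      have hxw : x ⬝ᵥ w ≠ 0 := by rw [dotProduct_comm]; exact hwx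
      have ht0 : t ≠ 0 := by
        rw [htdef]
        exact div_ne_zero (by simpa using hxw) hww.ne'
      set y := x + t • w with hy
      have hyy : y ⬝ᵥ y = Δ ^ 2 := by
        rw [hy]
        simp only [dotProduct_add, add_dotProduct, dotProduct_smul, smul_dotProduct,
          smul_eq_mul]
        rw [hxx, dotProduct_comm w x]
        rw [htdef]
        field_simp
        ring
      have h4 := key y hyy
      rw [hy, add_sub_cancel_left, mulVec_smul, dotProduct_smul, smul_dotProduct,
        smul_eq_mul, smul_eq_mul] at h4
      have ht2 : 0 < t ^ 2 := by positivity
      nlinarith [h4, ht2]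
    rw [posSemidef_iff_dotProduct_mulVec]
    constructor
    · show Bᴴ = B
      have e : Bᴴ = Bᵀ := by ext i j; simp [conjTranspose_apply]
      rw [e]; exact hBsymm
    · intro w
      simp only [star_trivial]
      by_cases hwx : w ⬝ᵥ x = 0
      · set q0 := w ⬝ᵥ (B *ᵥ w) with hq0
        set c1 := w ⬝ᵥ (B *ᵥ x) + x ⬝ᵥ (B *ᵥ w) with hc1
        set c2 := x ⬝ᵥ (B *ᵥ x) with hc2
        have hq : ∀ ε : ℝ, 0 < ε → 0 ≤ q0 + ε * c1 + ε ^ 2 * c2 := by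
          intro ε hε
          have h1 : (w + ε • x) ⬝ᵥ x ≠ 0 := by
            rw [add_dotProduct, hwx, smul_dotProduct, smul_eq_mul, hxx, zero_add]
            exact mul_ne_zero hε.ne' hΔ2
          have h2 := claim1 (w + ε • x) h1
          have h3 : (w + ε • x) ⬝ᵥ (B *ᵥ (w + ε • x)) = q0 + ε * c1 + ε ^ 2 * c2 := by
            rw [mulVec_add, mulVec_smul]
            simp only [dotProduct_add, add_dotProduct, dotProduct_smul, smul_dotProduct,
              smul_eq_mul, hq0, hc1, hc2]
            ring
          rw [h3] at h2
          exact h2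
        have hcont : Filter.Tendsto (fun ε : ℝ => q0 + ε * c1 + ε ^ 2 * c2)
            (nhdsWithin 0 (Set.Ioi 0)) (nhds q0) := by
          have hctu : Continuous fun ε : ℝ => q0 + ε * c1 + ε ^ 2 * c2 :=
            (continuous_const.add (continuous_id.mul continuous_const)).add
              ((continuous_pow 2).mul continuous_const)
          have := (hctu.tendsto 0).mono_left (nhdsWithin_le_nhds (s := Set.Ioi (0:ℝ)))
          simpa using this
        exact ge_of_tendsto hcont
          (Filter.eventually_of_mem self_mem_nhdsWithin fun ε hε => hq ε hε)
      · exact claim1 w hwx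
  · -- easy direction
    rintro ⟨lam, hg, hpsd⟩ y hy
    have hyy : y ⬝ᵥ y = Δ ^ 2 := by rw [← hy, Real.sq_sqrt (dot_self_nonneg' y)]
    have hid := key_identity' A hA lam g x y hg (by rw [hyy, hxx])
    have hq := hpsd.dotProduct_mulVec_nonneg (y - x)
    simp only [star_trivial] at hq
    linarith [hid, hq]
end

section
/- Suppose x* is a global solution of the spherically constrained problem and λ* ∈ ℝ satisfies ‖x*‖ = Δ, (A + λ* I)x* = −g, and A + λ* I positive semidefinite. Then either λ* = λₙ, or λ* > λₙ and h(λ*) = 0. -/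
open Matrix

/-- If `x*` is a global solution of the spherically constrained problem with multiplier
`λ*` (i.e. `‖x*‖ = Δ`, `(A+λ*I)x* = −g`, `A+λ*I ⪰ 0`), and `W̄ᵀAW̄ = diag(−λ₁,…,−λₙ)` with
`λ₁ ≤ ⋯ ≤ λₙ`, then either `λ* = λₙ`, or `λ* > λₙ` and `h(λ*) = 0`, where
`h(λ) = Σᵢ (wᵢᵀg)²/(λ−λᵢ)² − Δ²`. -/
theorem stmt4 (n : ℕ) (hn : 1 ≤ n) (A : Matrix (Fin n) (Fin n) ℝ) (hA : A.IsSymm)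
    (g : Fin n → ℝ) (Δ : ℝ) (hΔ : 0 < Δ)
    (x : Fin n → ℝ) (lam : ℝ)
    (hxnorm : Real.sqrt (x ⬝ᵥ x) = Δ)
    (hglobal : ∀ y : Fin n → ℝ, Real.sqrt (y ⬝ᵥ y) = Δ →
        g ⬝ᵥ x + (1 / 2) * (x ⬝ᵥ (A *ᵥ x)) ≤ g ⬝ᵥ y + (1 / 2) * (y ⬝ᵥ (A *ᵥ y)))
    (hfoc : (A + lam • (1 : Matrix (Fin n) (Fin n) ℝ)) *ᵥ x = -g)
    (hpsd : (A + lam • (1 : Matrix (Fin n) (Fin n) ℝ)).PosSemidef)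
    (W : Matrix (Fin n) (Fin n) ℝ) (eig : Fin n → ℝ)
    (hWorth : Wᵀ * W = 1)
    (hWdiag : Wᵀ * A * W = Matrix.diagonal fun i => -(eig i))
    (hmono : Monotone eig) :
    lam = eig ⟨n - 1, by omega⟩ ∨
      (lam > eig ⟨n - 1, by omega⟩ ∧
        (∑ i : Fin n, (∑ j : Fin n, W j i * g j) ^ 2 / (lam - eig i) ^ 2) - Δ ^ 2 = 0) := by
  set B : Matrix (Fin n) (Fin n) ℝ := A + lam • (1 : Matrix (Fin n) (Fin n) ℝ) with hB
  have hWW' : W * Wᵀ = 1 := mul_eq_one_comm.mp hWorth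
  have hconj : Wᵀ * B * W = Matrix.diagonal fun i => lam - eig i := by
    rw [hB, Matrix.mul_add, Matrix.add_mul, hWdiag]
    have : Wᵀ * (lam • (1 : Matrix (Fin n) (Fin n) ℝ)) * W
        = lam • (1 : Matrix (Fin n) (Fin n) ℝ) := by
      rw [Matrix.mul_smul, Matrix.mul_one, Matrix.smul_mul, hWorth]
    rw [this]
    ext i j
    by_cases h : i = j <;>
      simp [Matrix.diagonal, h, Matrix.one_apply, sub_eq_neg_add]
  have hconjpsd : (Wᵀ * B * W).PosSemidef := by
    have h0 := hpsd.mul_mul_conjTranspose_same Wᵀ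
    have h1 : (Wᵀ)ᴴ = W := by
      ext i j; simp [Matrix.conjTranspose_apply]
    rwa [h1] at h0
  have hge : ∀ i, eig i ≤ lam := by
    intro i
    have h2 := hconjpsd
    rw [hconj] at h2
    have h0 := Matrix.posSemidef_diagonal_iff.mp h2 i
    linarith
  have hge' : eig ⟨n - 1, by omega⟩ ≤ lam := hge _
  rcases eq_or_lt_of_le hge' with heq | hlt
  · exact Or.inl heq.symm
  · right
    refine ⟨hlt, ?_⟩
    have hpos : ∀ i, 0 < lam - eig i := by
      intro i
      have hle : eig i ≤ eig ⟨n - 1, by omega⟩ := by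
        apply hmono
        exact Fin.mk_le_mk.mpr (by omega) |>.trans_eq rfl
      linarith
    set z : Fin n → ℝ := Wᵀ *ᵥ x with hz
    have hmain : Matrix.diagonal (fun i => lam - eig i) *ᵥ z = Wᵀ *ᵥ (-g) := by
      rw [← hconj, hz]
      calc (Wᵀ * B * W) *ᵥ (Wᵀ *ᵥ x) = (Wᵀ * B * W * Wᵀ) *ᵥ x := by
            rw [Matrix.mulVec_mulVec]
        _ = (Wᵀ * B) *ᵥ x := by rw [Matrix.mul_assoc (Wᵀ * B), hWW', Matrix.mul_one]
        _ = Wᵀ *ᵥ (B *ᵥ x) := by rw [← Matrix.mulVec_mulVec]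
        _ = Wᵀ *ᵥ (-g) := by rw [hfoc]
    have hkey : ∀ i, (lam - eig i) * z i = -(∑ j, W j i * g j) := by
      intro i
      have h := congrFun hmain i
      rw [Matrix.mulVec_diagonal] at h
      rw [h]
      simp [Matrix.mulVec, dotProduct, Matrix.transpose_apply]
    have hsq : ∀ i, (∑ j, W j i * g j) ^ 2 / (lam - eig i) ^ 2 = z i ^ 2 := by
      intro i
      have h1 := hkey i
      have h2 : (lam - eig i) ≠ 0 := ne_of_gt (hpos i)
      have h4 : (∑ j, W j i * g j) = -((lam - eig i) * z i) := by linarith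
      rw [h4]
      rw [neg_pow, mul_pow]
      field_simp
    have hzz : ∑ i, z i ^ 2 = Δ ^ 2 := by
      have h1 : z ⬝ᵥ z = x ⬝ᵥ x := by
        rw [hz]
        calc (Wᵀ *ᵥ x) ⬝ᵥ (Wᵀ *ᵥ x) = (x ᵥ* W) ⬝ᵥ (Wᵀ *ᵥ x) := by
              rw [Matrix.mulVec_transpose]
          _ = x ⬝ᵥ (W *ᵥ (Wᵀ *ᵥ x)) := by rw [← Matrix.dotProduct_mulVec]
          _ = x ⬝ᵥ ((W * Wᵀ) *ᵥ x) := by rw [Matrix.mulVec_mulVec]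
          _ = x ⬝ᵥ x := by rw [hWW', Matrix.one_mulVec]
      have h2 : x ⬝ᵥ x = Δ ^ 2 := by
        have hxx : 0 ≤ x ⬝ᵥ x :=
          Finset.sum_nonneg fun i _ => mul_self_nonneg (x i)
        rw [← hxnorm, Real.sq_sqrt hxx]
      rw [← h2, ← h1]
      simp [dotProduct, pow_two]
    rw [Finset.sum_congr rfl fun i _ => hsq i, hzz]
    ring
end

section
/- Suppose x* is a global solution of the spherically constrained problem and λ* ∈ ℝ satisfies ‖x*‖ = Δ, (A + λ* I)x* = −g, and A + λ* I positive semidefinite. Then det(Q̄(λ*)) = 0 and det(Q̃(λ*)) = 0. Moreover, letting −λₙ denote the smallest eigenvalue of A, there always exists some λ ∈ [λₙ, +∞) with det(Q̃(λ)) = 0. -/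
open Matrix

/-- The 2n×2n block matrix `Q̃(λ) = [[−Iₙ, A+λIₙ], [A+λIₙ, −g gᵀ/Δ²]]`. -/
noncomputable def Qtilde (n : ℕ) (A : Matrix (Fin n) (Fin n) ℝ) (g : Fin n → ℝ)
    (Δ lam : ℝ) : Matrix (Fin n ⊕ Fin n) (Fin n ⊕ Fin n) ℝ :=
  Matrix.fromBlocks (-1) (A + lam • 1) (A + lam • 1) (-((Δ ^ 2)⁻¹ • Matrix.vecMulVec g g))

/-- The (2n+1)×(2n+1) block matrix
`Q̄(λ) = [[Δ², 0, gᵀ], [0, −Iₙ, A+λIₙ], [g, A+λIₙ, 0]]`. -/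
noncomputable def Qbar (n : ℕ) (A : Matrix (Fin n) (Fin n) ℝ) (g : Fin n → ℝ)
    (Δ lam : ℝ) : Matrix (Unit ⊕ (Fin n ⊕ Fin n)) (Unit ⊕ (Fin n ⊕ Fin n)) ℝ :=
  Matrix.fromBlocks (Matrix.of fun _ _ => Δ ^ 2)
    (Matrix.of fun _ j => Sum.elim (fun _ => (0 : ℝ)) g j)
    (Matrix.of fun i _ => Sum.elim (fun _ => (0 : ℝ)) g i)
    (Matrix.fromBlocks (-1) (A + lam • 1) (A + lam • 1) 0)

/-- If `x*` is a global solution with multiplier `λ*`, then `det(Q̄(λ*)) = 0` and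
`det(Q̃(λ*)) = 0`; moreover, if `−λₙ` is the smallest eigenvalue of `A`, there always
exists some `λ ∈ [λₙ, ∞)` with `det(Q̃(λ)) = 0`. -/
theorem stmt5 (n : ℕ) (hn : 1 ≤ n) (A : Matrix (Fin n) (Fin n) ℝ) (hA : A.IsSymm)
    (g : Fin n → ℝ) (Δ : ℝ) (hΔ : 0 < Δ)
    (x : Fin n → ℝ) (lam : ℝ)
    (hxnorm : Real.sqrt (x ⬝ᵥ x) = Δ)
    (hglobal : ∀ y : Fin n → ℝ, Real.sqrt (y ⬝ᵥ y) = Δ →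
        g ⬝ᵥ x + (1 / 2) * (x ⬝ᵥ (A *ᵥ x)) ≤ g ⬝ᵥ y + (1 / 2) * (y ⬝ᵥ (A *ᵥ y)))
    (hfoc : (A + lam • (1 : Matrix (Fin n) (Fin n) ℝ)) *ᵥ x = -g)
    (hpsd : (A + lam • (1 : Matrix (Fin n) (Fin n) ℝ)).PosSemidef)
    (lamN : ℝ)
    (hsmall : IsLeast {μ : ℝ | ∃ v : Fin n → ℝ, v ≠ 0 ∧ A *ᵥ v = μ • v} (-lamN)) :
    (Qbar n A g Δ lam).det = 0 ∧ (Qtilde n A g Δ lam).det = 0 ∧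
      ∃ μ : ℝ, lamN ≤ μ ∧ (Qtilde n A g Δ μ).det = 0 := by
  set B := A + lam • (1 : Matrix (Fin n) (Fin n) ℝ) with hBdef
  have hΔ2 : (0:ℝ) < Δ ^ 2 := by positivity
  have hx2 : x ⬝ᵥ x = Δ ^ 2 := by
    have h0 : (0:ℝ) ≤ x ⬝ᵥ x := Finset.sum_nonneg fun i _ => mul_self_nonneg _
    calc x ⬝ᵥ x = Real.sqrt (x ⬝ᵥ x) ^ 2 := (Real.sq_sqrt h0).symm
    _ = Δ ^ 2 := by rw [hxnorm]
  have hxne : x ≠ 0 := by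
    intro h
    rw [h] at hx2
    simp [dotProduct] at hx2
    nlinarith
  have hBsymm : Bᵀ = B := by
    rw [hBdef]
    rw [Matrix.transpose_add, hA.eq]
    congr 1
    simp [Matrix.transpose_smul]
  have hdotB : ∀ v w : Fin n → ℝ, (B *ᵥ v) ⬝ᵥ w = v ⬝ᵥ (B *ᵥ w) := by
    intro v w
    rw [Matrix.dotProduct_mulVec, ← Matrix.mulVec_transpose, hBsymm,
      dotProduct_comm]
  have hvv : ∀ v : Fin n → ℝ, Matrix.vecMulVec g g *ᵥ v = (g ⬝ᵥ v) • g := by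
    intro v
    funext i
    simp only [Matrix.mulVec, Matrix.vecMulVec_apply, dotProduct, Pi.smul_apply,
      smul_eq_mul, Finset.sum_mul, Finset.mul_sum]
    congr 1; funext j; ring
  -- key: there exist u v with the kernel relations
  obtain ⟨u, v, t, huv, h1, h2, h3, h4⟩ :
      ∃ (u v : Fin n → ℝ) (t : ℝ), (¬ (u = 0 ∧ v = 0)) ∧ B *ᵥ v = u ∧
        B *ᵥ u + (-((Δ ^ 2)⁻¹ • Matrix.vecMulVec g g)) *ᵥ v = 0 ∧
        Δ ^ 2 * t + g ⬝ᵥ v = 0 ∧ t • g + B *ᵥ u = 0 := by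
    by_cases hdet : B.det = 0
    · obtain ⟨w, hwne, hw⟩ := Matrix.exists_mulVec_eq_zero_iff.mpr hdet
      have hgw : g ⬝ᵥ w = 0 := by
        have : (B *ᵥ x) ⬝ᵥ w = x ⬝ᵥ (B *ᵥ w) := hdotB x w
        rw [hfoc, hw, dotProduct_zero, neg_dotProduct] at this
        linarith
      refine ⟨0, w, 0, ?_, by rw [hw], ?_, ?_, ?_⟩
      · rintro ⟨-, h⟩; exact hwne h
      · rw [Matrix.mulVec_zero, Matrix.neg_mulVec, Matrix.smul_mulVec, hvv, hgw]
        simp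
      · simp [hgw]
      · simp
    · have hUnit : IsUnit B.det := isUnit_iff_ne_zero.mpr hdet
      have h1 : B *ᵥ (B⁻¹ *ᵥ x) = x := by
        rw [Matrix.mulVec_mulVec, Matrix.mul_nonsing_inv _ hUnit, Matrix.one_mulVec]
      have hgv : g ⬝ᵥ (B⁻¹ *ᵥ x) = -Δ ^ 2 := by
        have h2 : (B *ᵥ x) ⬝ᵥ (B⁻¹ *ᵥ x) = x ⬝ᵥ (B *ᵥ (B⁻¹ *ᵥ x)) := hdotB x _
        rw [hfoc, h1, hx2, neg_dotProduct] at h2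
        linarith
      refine ⟨x, B⁻¹ *ᵥ x, 1, fun h => hxne h.1, h1, ?_, ?_, ?_⟩
      · rw [hfoc, Matrix.neg_mulVec, Matrix.smul_mulVec, hvv, hgv]
        funext i
        simp only [Pi.add_apply, Pi.neg_apply, Pi.smul_apply, smul_eq_mul, Pi.zero_apply]
        field_simp
        ring
      · rw [hgv]; ring
      · rw [hfoc]; funext i; simp
  -- determinant of Qtilde is zero
  have hQt : (Qtilde n A g Δ lam).det = 0 := by
    rw [← Matrix.exists_mulVec_eq_zero_iff]
    refine ⟨Sum.elim u v, ?_, ?_⟩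
    · intro h
      exact huv ⟨funext fun i => congrFun h (Sum.inl i), funext fun i => congrFun h (Sum.inr i)⟩
    · rw [Qtilde, Matrix.fromBlocks_mulVec]
      have e1 : Sum.elim u v ∘ Sum.inl = u := rfl
      have e2 : Sum.elim u v ∘ Sum.inr = v := rfl
      rw [e1, e2, Matrix.neg_mulVec, Matrix.one_mulVec, h1, h2]
      funext i; cases i <;> simp
  have hQb : (Qbar n A g Δ lam).det = 0 := by
    rw [← Matrix.exists_mulVec_eq_zero_iff]
    refine ⟨Sum.elim (fun _ => t) (Sum.elim u v), ?_, ?_⟩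
    · intro h
      have ht : t = 0 := congrFun h (Sum.inl ())
      refine huv ⟨funext fun i => congrFun h (Sum.inr (Sum.inl i)),
        funext fun i => congrFun h (Sum.inr (Sum.inr i))⟩
    · rw [Qbar, Matrix.fromBlocks_mulVec]
      have e1 : (Sum.elim (fun _ => t) (Sum.elim u v) : Unit ⊕ (Fin n ⊕ Fin n) → ℝ) ∘ Sum.inl
          = fun _ => t := rfl
      have e2 : (Sum.elim (fun _ => t) (Sum.elim u v) : Unit ⊕ (Fin n ⊕ Fin n) → ℝ) ∘ Sum.inr
          = Sum.elim u v := rfl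
      rw [e1, e2, Matrix.fromBlocks_mulVec]
      have e3 : Sum.elim u v ∘ Sum.inl = u := rfl
      have e4 : Sum.elim u v ∘ Sum.inr = v := rfl
      rw [e3, e4, Matrix.neg_mulVec, Matrix.one_mulVec, h1, Matrix.zero_mulVec]
      funext i
      rcases i with _ | (j | j)
      · have : (Matrix.of fun _ j => Sum.elim (fun _ => (0:ℝ)) g j) *ᵥ Sum.elim u v
            = fun _ : Unit => g ⬝ᵥ v := by
          funext k
          simp [Matrix.mulVec, dotProduct, Fintype.sum_sum_type]
        rw [this]
        simp only [Sum.elim_inl, Pi.add_apply, Matrix.mulVec, dotProduct,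
          Matrix.of_apply]
        simpa [dotProduct] using h3
      · simp [Matrix.mulVec, dotProduct]
      · have h4j := congrFun h4 j
        simp only [Sum.elim_inr, Pi.add_apply, Matrix.mulVec, dotProduct,
          Matrix.of_apply, Sum.elim_inl, Sum.elim_inr, Pi.zero_apply,
          Matrix.mulVec_zero, Pi.smul_apply, smul_eq_mul] at h4j ⊢
        rw [Finset.sum_const]
        simpa [mul_comm, hBdef] using h4j
  refine ⟨hQb, hQt, lam, ?_, hQt⟩
  -- lamN ≤ lam
  obtain ⟨w, hwne, hw⟩ := hsmall.1
  have hBw : B *ᵥ w = (lam - lamN) • w := by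
    rw [hBdef, Matrix.add_mulVec, hw, Matrix.smul_mulVec, Matrix.one_mulVec]
    funext i; simp; ring
  have hww : 0 < w ⬝ᵥ w := by
    obtain ⟨i, hi⟩ := Function.ne_iff.mp hwne
    have h1 : w i * w i ≤ w ⬝ᵥ w :=
      Finset.single_le_sum (f := fun j => w j * w j)
        (fun j _ => mul_self_nonneg _) (Finset.mem_univ i)
    have h2 : 0 < w i * w i := mul_self_pos.mpr hi
    linarith
  have hq := hpsd.dotProduct_mulVec_nonneg w
  rw [hBw] at hq
  simp [dotProduct_smul] at hq
  nlinarith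
end

section
/- For every λ ∈ ℝ such that A + λI is invertible, det(Q̄(λ)) = (−1)ⁿ det(A+λI)² (Δ² − ‖(A+λI)⁻¹g‖²) = (−1)^{n+1} det(A+λI)² h(λ). -/
open Matrix

/-- For every `λ` with `A + λI` invertible,
`det(Q̄(λ)) = (−1)ⁿ det(A+λI)² (Δ² − ‖(A+λI)⁻¹g‖²) = (−1)^{n+1} det(A+λI)² h(λ)`,
where `h(λ) = Σᵢ (wᵢᵀg)²/(λ−λᵢ)² − Δ²` for the eigendecomposition `W̄ᵀAW̄ = diag(−λᵢ)`. -/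
theorem stmt6 (n : ℕ) (hn : 1 ≤ n) (A : Matrix (Fin n) (Fin n) ℝ) (hA : A.IsSymm)
    (g : Fin n → ℝ) (Δ : ℝ) (hΔ : 0 < Δ)
    (W : Matrix (Fin n) (Fin n) ℝ) (eig : Fin n → ℝ)
    (hWorth : Wᵀ * W = 1)
    (hWdiag : Wᵀ * A * W = Matrix.diagonal fun i => -(eig i))
    (hmono : Monotone eig)
    (lam : ℝ) (hinv : IsUnit (A + lam • (1 : Matrix (Fin n) (Fin n) ℝ))) :
    (Qbar n A g Δ lam).det =
        (-1 : ℝ) ^ n * (A + lam • (1 : Matrix (Fin n) (Fin n) ℝ)).det ^ 2 *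
          (Δ ^ 2 - ((A + lam • (1 : Matrix (Fin n) (Fin n) ℝ))⁻¹ *ᵥ g) ⬝ᵥ
            ((A + lam • (1 : Matrix (Fin n) (Fin n) ℝ))⁻¹ *ᵥ g)) ∧
      (Qbar n A g Δ lam).det =
        (-1 : ℝ) ^ (n + 1) * (A + lam • (1 : Matrix (Fin n) (Fin n) ℝ)).det ^ 2 *
          ((∑ i : Fin n, (∑ j : Fin n, W j i * g j) ^ 2 / (lam - eig i) ^ 2) - Δ ^ 2) := by
  set B := A + lam • (1 : Matrix (Fin n) (Fin n) ℝ) with hBdef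
  letI : Invertible B := hinv.invertible
  have hBsym : Bᵀ = B := by
    rw [hBdef, Matrix.transpose_add, Matrix.transpose_smul, Matrix.transpose_one, hA.eq]
  have hinvsym : (B⁻¹)ᵀ = B⁻¹ := by
    rw [Matrix.transpose_nonsing_inv, hBsym]
  -- determinant of the lower-right 2n × 2n block
  have hdetM : (Matrix.fromBlocks (-1) B B (0 : Matrix (Fin n) (Fin n) ℝ)).det
      = (-1 : ℝ) ^ n * B.det ^ 2 := by
    letI : Invertible (-1 : Matrix (Fin n) (Fin n) ℝ) :=
      invertibleOfRightInverse _ (-1) (by simp)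
    rw [Matrix.det_fromBlocks₁₁]
    have h1 : (⅟(-1 : Matrix (Fin n) (Fin n) ℝ)) = -1 := by
      apply invOf_eq_right_inv; simp
    rw [h1]
    simp [Matrix.det_neg, pow_two, Matrix.det_mul, pow_mul]
  -- Schur complement expansion of det Qbar
  have hdetQ : (Qbar n A g Δ lam).det
      = (Matrix.fromBlocks (-1) B B (0 : Matrix (Fin n) (Fin n) ℝ)).det *
        (Δ ^ 2 - ∑ j, ∑ k, g j * (B⁻¹ * B⁻¹) j k * g k) := by
    letI iM : Invertible (Matrix.fromBlocks (-1) B B (0 : Matrix (Fin n) (Fin n) ℝ)) :=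
      invertibleOfRightInverse _
        (Matrix.fromBlocks 0 B⁻¹ B⁻¹ (B⁻¹ * B⁻¹)) (by
          rw [Matrix.fromBlocks_multiply, ← Matrix.fromBlocks_one]
          congr 1 <;>
            simp [Matrix.mul_assoc, Matrix.mul_inv_of_invertible, ← Matrix.mul_assoc])
    rw [Qbar, ← hBdef, Matrix.det_fromBlocks₂₂]
    congr 1
    rw [Matrix.det_unique]
    have hM : (⅟(Matrix.fromBlocks (-1) B B (0 : Matrix (Fin n) (Fin n) ℝ)))
        = Matrix.fromBlocks 0 B⁻¹ B⁻¹ (B⁻¹ * B⁻¹) := rfl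
    rw [hM]
    simp [Matrix.mul_apply, Fintype.sum_sum_type, Matrix.fromBlocks, Finset.mul_sum,
      Finset.sum_mul, mul_assoc]
    rw [Finset.sum_comm]
  -- the quadratic form equals the norm square
  have hq : (∑ j, ∑ k, g j * (B⁻¹ * B⁻¹) j k * g k)
      = (B⁻¹ *ᵥ g) ⬝ᵥ (B⁻¹ *ᵥ g) := by
    have h1 : B⁻¹ *ᵥ g = g ᵥ* B⁻¹ := by
      conv_lhs => rw [← hinvsym]
      rw [Matrix.mulVec_transpose]
    nth_rewrite 1 [h1]
    rw [Matrix.dotProduct_mulVec, Matrix.vecMul_vecMul]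
    simp [Matrix.vecMul, dotProduct, Matrix.mul_apply, Finset.sum_mul,
      Finset.mul_sum, mul_assoc, mul_comm, mul_left_comm]
    rw [Finset.sum_comm]
    refine Finset.sum_congr rfl fun j _ => Finset.sum_congr rfl fun k _ =>
      Finset.sum_congr rfl fun i _ => by ring
  -- eigendecomposition of B
  have hWW' : W * Wᵀ = 1 := mul_eq_one_comm.mp hWorth
  have hAeq : A = W * Matrix.diagonal (fun i => -(eig i)) * Wᵀ := by
    rw [← hWdiag]
    calc A = (W * Wᵀ) * A * (W * Wᵀ) := by rw [hWW']; simp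
    _ = W * (Wᵀ * A * W) * Wᵀ := by noncomm_ring
  have hBdecomp : B = W * Matrix.diagonal (fun i => lam - eig i) * Wᵀ := by
    have hd : Matrix.diagonal (fun i => lam - eig i)
        = Matrix.diagonal (fun i => -(eig i)) + lam • 1 := by
      ext i j
      rcases eq_or_ne i j with rfl | h
      · simp [Matrix.one_apply]; ring
      · simp [Matrix.diagonal_apply_ne _ h, Matrix.one_apply_ne h]
    rw [hBdef, hd, Matrix.mul_add, Matrix.add_mul, ← hAeq]
    congr 1
    simp [Matrix.mul_smul, Matrix.smul_mul, hWW']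
  have hne : ∀ i, lam - eig i ≠ 0 := by
    intro i hi
    have hdet : B.det = W.det * (∏ j, (lam - eig j)) * W.det := by
      rw [hBdecomp, Matrix.det_mul, Matrix.det_mul, Matrix.det_diagonal,
        Matrix.det_transpose]
    have : B.det = 0 := by
      rw [hdet, Finset.prod_eq_zero (Finset.mem_univ i) hi]; ring
    exact (hinv.map (Matrix.detMonoidHom)).ne_zero this
  have hBinv : B⁻¹ = W * Matrix.diagonal (fun i => (lam - eig i)⁻¹) * Wᵀ := by
    apply Matrix.inv_eq_right_inv
    rw [hBdecomp]
    calc W * Matrix.diagonal (fun i => lam - eig i) * Wᵀ *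
          (W * Matrix.diagonal (fun i => (lam - eig i)⁻¹) * Wᵀ)
        = W * (Matrix.diagonal (fun i => lam - eig i) * (Wᵀ * W) *
            Matrix.diagonal (fun i => (lam - eig i)⁻¹)) * Wᵀ := by noncomm_ring
      _ = 1 := by
          rw [hWorth, Matrix.mul_one, Matrix.diagonal_mul_diagonal]
          have : (fun i => (lam - eig i) * (lam - eig i)⁻¹) = fun _ => (1 : ℝ) := by
            funext i; exact mul_inv_cancel₀ (hne i)
          rw [this, Matrix.diagonal_one, Matrix.mul_one, hWW']
  -- norm square equals h-sum
  have hsum : (B⁻¹ *ᵥ g) ⬝ᵥ (B⁻¹ *ᵥ g)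
      = ∑ i : Fin n, (∑ j : Fin n, W j i * g j) ^ 2 / (lam - eig i) ^ 2 := by
    set v : Fin n → ℝ := Wᵀ *ᵥ g with hv
    have h1 : B⁻¹ *ᵥ g = W *ᵥ (Matrix.diagonal (fun i => (lam - eig i)⁻¹) *ᵥ v) := by
      rw [hBinv, hv]
      simp only [Matrix.mulVec_mulVec, Matrix.mul_assoc]
    rw [h1]
    set x : Fin n → ℝ := Matrix.diagonal (fun i => (lam - eig i)⁻¹) *ᵥ v with hx
    have h2 : (W *ᵥ x) ⬝ᵥ (W *ᵥ x) = x ⬝ᵥ x := by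
      rw [Matrix.dotProduct_mulVec]
      have : (W *ᵥ x) ᵥ* W = x ᵥ* (Wᵀ * W) := by
        rw [← Matrix.vecMul_vecMul]
        congr 1
        rw [← Matrix.vecMul_transpose]
      rw [this, hWorth, Matrix.vecMul_one]
    rw [h2]
    have hxi : ∀ i, x i = (lam - eig i)⁻¹ * v i := by
      intro i; rw [hx, Matrix.mulVec_diagonal]
    have hvi : ∀ i, v i = ∑ j, W j i * g j := by
      intro i
      simp [hv, Matrix.mulVec, dotProduct]
    rw [dotProduct]
    apply Finset.sum_congr rfl
    intro i _
    rw [hxi, hvi]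
    field_simp
  constructor
  · rw [hdetQ, hdetM, hq]
  · rw [hdetQ, hdetM, hq, hsum]
    ring
end

section
/- Suppose x* is a global solution of the spherically constrained problem and λ* ∈ ℝ satisfies ‖x*‖ = Δ, (A + λ* I)x* = −g, and A + λ* I positive semidefinite. Then the set S = {λ ∈ ℝ : det(Q̃(λ)) = 0} is nonempty and λ* = max S; that is, the multiplier of any global solution equals the largest real eigenvalue of the eigenvalue problem det(Q̃(λ)) = 0. Conversely, if λ* is the largest real number with det(Q̃(λ*)) = 0, then there exists x* with ‖x*‖ = Δ, (A + λ* I)x* = −g, and A + λ* I positive semidefinite, so that x* is a global solution with multiplier λ*. -/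
open Matrix

/-- The "diagonalized" root set. -/
def Tset (n : ℕ) (d gh : Fin n → ℝ) (Δ : ℝ) : Set ℝ :=
  {lam | ∃ y : Fin n → ℝ, y ≠ 0 ∧
    ∀ i, (d i + lam) ^ 2 * y i = ((∑ j, gh j * y j) / Δ ^ 2) * gh i}

lemma vecMulVec_mulVec' {n : ℕ} (g v : Fin n → ℝ) :
    Matrix.vecMulVec g g *ᵥ v = (g ⬝ᵥ v) • g := by
  funext i
  simp [Matrix.vecMulVec, Matrix.mulVec, dotProduct, Finset.mul_sum, mul_comm, mul_left_comm]

section Diag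

variable {n : ℕ} {d gh : Fin n → ℝ} {Δ : ℝ}

/-- IVT-based secular equation root finder. -/
lemma exists_secular_root (hΔ : 0 < Δ) (a : ℝ)
    (hpos : ∀ i, gh i = 0 ∨ 0 < d i + a)
    (hge : ∀ i, 0 ≤ d i + a)
    (hbig : Δ ^ 2 ≤ ∑ i, gh i ^ 2 / (d i + a) ^ 2) :
    ∃ μ ∈ Tset n d gh Δ, a ≤ μ ∧ (Δ ^ 2 < ∑ i, gh i ^ 2 / (d i + a) ^ 2 → a < μ) := by
  classical
  set φ : ℝ → ℝ := fun lam => ∑ i, gh i ^ 2 / (d i + lam) ^ 2 with hφ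
  set G : ℝ := ∑ i, gh i ^ 2 with hG
  have hGnn : 0 ≤ G := Finset.sum_nonneg fun i _ => sq_nonneg _
  have hGpos : 0 < G := by
    rcases hGnn.lt_or_eq with h | h
    · exact h
    · exfalso
      have hG0 : ∀ i, gh i = 0 := by
        intro i
        have h1 : ∀ i ∈ Finset.univ, (0:ℝ) ≤ gh i ^ 2 := fun i _ => sq_nonneg _
        have h2 := (Finset.sum_eq_zero_iff_of_nonneg h1).mp h.symm i (Finset.mem_univ i)
        exact pow_eq_zero_iff two_ne_zero |>.mp h2
      have hz : φ a = 0 := Finset.sum_eq_zero fun i _ => by rw [hG0 i]; simp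
      rw [hφ] at hz
      simp only at hz
      nlinarith [hbig, hΔ]
  set b : ℝ := a + Real.sqrt G / Δ + 1 with hb
  have hsnn : 0 ≤ Real.sqrt G / Δ := by positivity
  have hab : a ≤ b := by rw [hb]; linarith
  have hsqrt : Real.sqrt G ^ 2 = G := Real.sq_sqrt hGnn
  have hterm : ∀ i, gh i ^ 2 / (d i + b) ^ 2 ≤ gh i ^ 2 * (Δ ^ 2 / G) := by
    intro i
    have h1 : Real.sqrt G / Δ ≤ d i + b := by
      have := hge i; rw [hb]; linarith
    have h2 : (0:ℝ) < G / Δ ^ 2 := by positivity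
    have h4 : (Real.sqrt G / Δ) ^ 2 = G / Δ ^ 2 := by rw [div_pow, hsqrt]
    have h3 : G / Δ ^ 2 ≤ (d i + b) ^ 2 := by
      rw [← h4]; exact pow_le_pow_left₀ hsnn h1 2
    calc gh i ^ 2 / (d i + b) ^ 2 ≤ gh i ^ 2 / (G / Δ ^ 2) :=
          div_le_div_of_nonneg_left (sq_nonneg _) h2 h3
      _ = gh i ^ 2 * (Δ ^ 2 / G) := by
          rw [div_div_eq_mul_div, mul_div_assoc]
  have hφb : φ b ≤ Δ ^ 2 := by
    calc φ b ≤ ∑ i, gh i ^ 2 * (Δ ^ 2 / G) := Finset.sum_le_sum fun i _ => hterm i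
      _ = G * (Δ ^ 2 / G) := by rw [← Finset.sum_mul]
      _ = Δ ^ 2 := by field_simp
  have hcont : ContinuousOn φ (Set.Icc a b) := by
    apply continuousOn_finset_sum
    intro i _
    rcases hpos i with h0 | hp
    · simp only [h0]
      simpa using continuousOn_const
    · apply ContinuousOn.div continuousOn_const
      · fun_prop
      · intro lam hlam
        have hdl : 0 < d i + lam := lt_of_lt_of_le hp (by linarith [hlam.1])
        positivity
  have key : Δ ^ 2 ∈ Set.Icc (φ b) (φ a) := ⟨hφb, hbig⟩
  obtain ⟨μ, hμmem, hμeq⟩ := intermediate_value_Icc' hab hcont key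
  have hdiμ : ∀ i, gh i ≠ 0 → 0 < d i + μ := by
    intro i hi
    rcases hpos i with h | h
    · exact absurd h hi
    · linarith [hμmem.1]
  refine ⟨μ, ?_, hμmem.1, ?_⟩
  · obtain ⟨i0, hi0⟩ : ∃ i, gh i ≠ 0 := by
      by_contra h
      push_neg at h
      have : G = 0 := Finset.sum_eq_zero fun i _ => by rw [h i]; ring
      exact absurd this hGpos.ne'
    refine ⟨fun i => gh i / (d i + μ) ^ 2, ?_, ?_⟩
    · intro h0
      have h1 := congrFun h0 i0
      have hd0 := hdiμ i0 hi0
      simp only [Pi.zero_apply] at h1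
      rw [div_eq_zero_iff] at h1
      rcases h1 with h1 | h1
      · exact hi0 h1
      · nlinarith
    · intro i
      have hsum : ∑ j, gh j * (gh j / (d j + μ) ^ 2) = Δ ^ 2 := by
        rw [← hμeq]
        exact Finset.sum_congr rfl fun j _ => by rw [mul_div_assoc']; ring_nf
      rw [hsum]
      rw [div_self (by positivity : (Δ:ℝ) ^ 2 ≠ 0), one_mul]
      rcases eq_or_ne (gh i) 0 with hz | hz
      · simp [hz]
      · have := hdiμ i hz
        field_simp
  · intro hstrict
    rcases hμmem.1.lt_or_eq with h | h
    · exact h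
    · exfalso
      rw [← h] at hμeq
      rw [hφ] at hμeq
      simp only at hμeq
      nlinarith [hstrict]

lemma diag_part1 (hΔ : 0 < Δ) (x : Fin n → ℝ) (lam : ℝ)
    (hx : ∑ i, x i ^ 2 = Δ ^ 2)
    (heq : ∀ i, (d i + lam) * x i = -gh i)
    (hpsd : ∀ i, 0 ≤ d i + lam) :
    IsGreatest (Tset n d gh Δ) lam := by
  classical
  have hΔ2 : (Δ:ℝ) ^ 2 ≠ 0 := by positivity
  constructor
  · by_cases hN : ∃ i0, d i0 + lam = 0
    · obtain ⟨i0, hi0⟩ := hN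
      have hgi0 : gh i0 = 0 := by have := heq i0; rw [hi0, zero_mul] at this; linarith
      refine ⟨Pi.single i0 1, ?_, ?_⟩
      · intro h
        have := congrFun h i0
        simp [Pi.single_eq_same] at this
      · intro i
        have hsum : ∑ j, gh j * (Pi.single i0 1 : Fin n → ℝ) j = 0 := by
          simp [Pi.single_apply, mul_ite, hgi0]
        rw [hsum]
        rcases eq_or_ne i i0 with rfl | hne
        · simp [Pi.single_eq_same, hi0]
        · simp [Pi.single_eq_of_ne hne]
    · push_neg at hN
      refine ⟨fun i => x i / (d i + lam), ?_, ?_⟩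
      · intro h
        have hx0 : ∀ i, x i = 0 := by
          intro i
          have h1 := congrFun h i
          simp only [Pi.zero_apply] at h1
          rcases div_eq_zero_iff.mp h1 with h2 | h2
          · exact h2
          · exact absurd h2 (hN i)
        have : ∑ i, x i ^ 2 = 0 := Finset.sum_eq_zero fun i _ => by rw [hx0 i]; ring
        rw [hx] at this
        exact hΔ2 this
      · intro i
        have hsum : ∑ j, gh j * (x j / (d j + lam)) = -Δ ^ 2 := by
          rw [← hx, ← Finset.sum_neg_distrib]
          refine Finset.sum_congr rfl fun j _ => ?_
          have hgj : gh j = -((d j + lam) * x j) := by linarith [heq j]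
          rw [hgj]
          field_simp [hN j]
        rw [hsum]
        have h1 : (d i + lam) ^ 2 * (x i / (d i + lam)) = (d i + lam) * x i := by
          field_simp [hN i]
        rw [h1, heq i]
        field_simp
  · rintro μ ⟨y, hy0, hyeq⟩
    by_contra hlt
    push_neg at hlt
    have hdμ : ∀ i, 0 < d i + μ := fun i => lt_of_le_of_lt (hpsd i) (by linarith)
    set c := (∑ j, gh j * y j) / Δ ^ 2 with hc
    have hcne : c ≠ 0 := by
      intro h0
      apply hy0
      funext i
      have h1 := hyeq i
      rw [h0, zero_mul] at h1
      have h2 : (d i + μ) ^ 2 ≠ 0 := by have := hdμ i; positivity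
      simpa [Pi.zero_apply] using (mul_eq_zero.mp h1).resolve_left h2
    have hyi : ∀ i, y i = c * gh i / (d i + μ) ^ 2 := by
      intro i
      have h2 : (d i + μ) ^ 2 ≠ 0 := by have := hdμ i; positivity
      rw [← hyeq i]
      exact (mul_div_cancel_left₀ _ h2).symm
    have hsum2 : ∑ j, gh j * y j = c * ∑ j, gh j ^ 2 / (d j + μ) ^ 2 := by
      rw [Finset.mul_sum]
      refine Finset.sum_congr rfl fun j _ => ?_
      rw [hyi j]
      ring
    have hsum1 : ∑ j, gh j * y j = c * Δ ^ 2 := by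
      rw [hc, div_mul_cancel₀ _ hΔ2]
    have hΔeq : ∑ j, gh j ^ 2 / (d j + μ) ^ 2 = Δ ^ 2 := by
      have := hsum1.symm.trans hsum2
      exact (mul_left_cancel₀ hcne this).symm
    have hterm : ∀ j, gh j ^ 2 / (d j + μ) ^ 2 ≤ x j ^ 2 := by
      intro j
      have hq : (0:ℝ) < (d j + μ) ^ 2 := by have := hdμ j; positivity
      rw [div_le_iff₀ hq]
      have hgj : gh j = -((d j + lam) * x j) := by linarith [heq j]
      calc gh j ^ 2 = (d j + lam) ^ 2 * x j ^ 2 := by rw [hgj]; ring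
        _ ≤ (d j + μ) ^ 2 * x j ^ 2 :=
            mul_le_mul_of_nonneg_right
              (pow_le_pow_left₀ (hpsd j) (by linarith : d j + lam ≤ d j + μ) 2) (sq_nonneg _)
        _ = x j ^ 2 * (d j + μ) ^ 2 := by ring
    obtain ⟨i1, hi1⟩ : ∃ i, x i ≠ 0 := by
      by_contra h
      push_neg at h
      have : ∑ i, x i ^ 2 = 0 := Finset.sum_eq_zero fun i _ => by rw [h i]; ring
      rw [hx] at this
      exact hΔ2 this
    have hstrict : gh i1 ^ 2 / (d i1 + μ) ^ 2 < x i1 ^ 2 := by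
      have hq : (0:ℝ) < (d i1 + μ) ^ 2 := by have := hdμ i1; positivity
      rw [div_lt_iff₀ hq]
      have hgj : gh i1 = -((d i1 + lam) * x i1) := by linarith [heq i1]
      have hxx : 0 < x i1 ^ 2 := by positivity
      calc gh i1 ^ 2 = (d i1 + lam) ^ 2 * x i1 ^ 2 := by rw [hgj]; ring
        _ < (d i1 + μ) ^ 2 * x i1 ^ 2 :=
            mul_lt_mul_of_pos_right
              (pow_lt_pow_left₀ (by linarith : d i1 + lam < d i1 + μ) (hpsd i1) two_ne_zero) hxx
        _ = x i1 ^ 2 * (d i1 + μ) ^ 2 := by ring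
    have hlt2 := Finset.sum_lt_sum (fun j _ => hterm j) ⟨i1, Finset.mem_univ i1, hstrict⟩
    rw [hΔeq, hx] at hlt2
    exact lt_irrefl _ hlt2

lemma diag_part2 (hn : 1 ≤ n) (hΔ : 0 < Δ) (lam : ℝ)
    (hg : IsGreatest (Tset n d gh Δ) lam) :
    ∃ x : Fin n → ℝ, (∑ i, x i ^ 2 = Δ ^ 2) ∧ (∀ i, (d i + lam) * x i = -gh i) ∧
      (∀ i, 0 ≤ d i + lam) := by
  classical
  obtain ⟨hmem, hub⟩ := hg
  have hΔ2 : (Δ:ℝ) ^ 2 ≠ 0 := by positivity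
  -- Step A: positive semidefiniteness
  have huniv : (Finset.univ : Finset (Fin n)).Nonempty := by
    refine ⟨⟨0, ?_⟩, Finset.mem_univ _⟩
    omega
  obtain ⟨i0, -, hmin⟩ := Finset.exists_min_image Finset.univ d huniv
  have hpsd : ∀ i, 0 ≤ d i + lam := by
    have hν : ∃ μ ∈ Tset n d gh Δ, -d i0 ≤ μ := by
      by_cases hc : gh i0 = 0
      · refine ⟨-d i0, ⟨Pi.single i0 1, ?_, ?_⟩, le_refl _⟩
        · intro h
          have := congrFun h i0
          simp [Pi.single_eq_same] at this
        · intro i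
          have hsum : ∑ j, gh j * (Pi.single i0 1 : Fin n → ℝ) j = 0 := by
            simp [Pi.single_apply, mul_ite, hc]
          rw [hsum]
          rcases eq_or_ne i i0 with rfl | hne
          · simp
          · simp [Pi.single_eq_of_ne hne]
      · have habs : 0 < |gh i0| / Δ := by
          have : 0 < |gh i0| := abs_pos.mpr hc
          positivity
        obtain ⟨μ, hμT, hμge, -⟩ := exists_secular_root hΔ (-d i0 + |gh i0| / Δ)
          (fun i => Or.inr (by have := hmin i (Finset.mem_univ i); linarith))
          (fun i => by have := hmin i (Finset.mem_univ i); linarith)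
          (by
            have hterm : gh i0 ^ 2 / (d i0 + (-d i0 + |gh i0| / Δ)) ^ 2 = Δ ^ 2 := by
              have h1 : d i0 + (-d i0 + |gh i0| / Δ) = |gh i0| / Δ := by ring
              rw [h1, div_pow, sq_abs]
              rw [div_div_eq_mul_div]
              field_simp
            calc Δ ^ 2 = gh i0 ^ 2 / (d i0 + (-d i0 + |gh i0| / Δ)) ^ 2 := hterm.symm
              _ ≤ ∑ i, gh i ^ 2 / (d i + (-d i0 + |gh i0| / Δ)) ^ 2 :=
                  Finset.single_le_sum
                    (f := fun i => gh i ^ 2 / (d i + (-d i0 + |gh i0| / Δ)) ^ 2)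
                    (fun i _ => by positivity) (Finset.mem_univ i0))
        exact ⟨μ, hμT, by linarith⟩
    obtain ⟨μ, hμT, hμge⟩ := hν
    intro i
    have h1 := hub hμT
    have h2 := hmin i (Finset.mem_univ i)
    linarith
  -- claim 1: hard-case orthogonality
  have hclaim1 : ∀ i, d i + lam = 0 → gh i = 0 := by
    intro i hz
    by_contra hgi
    have habs : 0 < |gh i| := abs_pos.mpr hgi
    have h3 : 0 < |gh i| / Δ := div_pos habs hΔ
    obtain ⟨μ, hμT, hμge, -⟩ := exists_secular_root hΔ (lam + |gh i| / Δ)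
      (fun j => Or.inr (by have := hpsd j; linarith))
      (fun j => by have := hpsd j; linarith)
      (by
        have h1 : d i + (lam + |gh i| / Δ) = |gh i| / Δ := by linarith
        have hterm : gh i ^ 2 / (d i + (lam + |gh i| / Δ)) ^ 2 = Δ ^ 2 := by
          rw [h1, div_pow, sq_abs, div_div_eq_mul_div]
          field_simp
        calc Δ ^ 2 = gh i ^ 2 / (d i + (lam + |gh i| / Δ)) ^ 2 := hterm.symm
          _ ≤ ∑ j, gh j ^ 2 / (d j + (lam + |gh i| / Δ)) ^ 2 :=
              Finset.single_le_sum
                (f := fun j => gh j ^ 2 / (d j + (lam + |gh i| / Δ)) ^ 2)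
                (fun j _ => by positivity) (Finset.mem_univ i))
    have h2 := hub hμT
    linarith
  set x0 : Fin n → ℝ := fun i => if d i + lam = 0 then 0 else -gh i / (d i + lam) with hx0
  have hkey : ∀ i, gh i ^ 2 / (d i + lam) ^ 2 = x0 i ^ 2 := by
    intro i
    rw [hx0]
    by_cases hz : d i + lam = 0
    · simp [hz, hclaim1 i hz]
    · simp only [if_neg hz]
      rw [div_pow, neg_sq]
  set L : ℝ := ∑ i, x0 i ^ 2 with hL
  have hsumL : ∑ i, gh i ^ 2 / (d i + lam) ^ 2 = L := by
    rw [hL]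
    exact Finset.sum_congr rfl fun i _ => hkey i
  have hLnn : 0 ≤ L := Finset.sum_nonneg fun i _ => sq_nonneg _
  have hLle : L ≤ Δ ^ 2 := by
    by_contra h
    push_neg at h
    obtain ⟨μ, hμT, -, hstrict⟩ := exists_secular_root hΔ lam
      (fun i => by
        by_cases hz : d i + lam = 0
        · exact Or.inl (hclaim1 i hz)
        · exact Or.inr (lt_of_le_of_ne (hpsd i) (Ne.symm hz)))
      hpsd
      (by rw [hsumL]; linarith)
    have hgt := hstrict (by rw [hsumL]; linarith)
    have := hub hμT
    linarith
  have hx0eq : ∀ i, (d i + lam) * x0 i = -gh i := by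
    intro i
    rw [hx0]
    by_cases hz : d i + lam = 0
    · simp [hz, hclaim1 i hz]
    · simp only [if_neg hz]
      field_simp
  by_cases hN : ∃ j, d j + lam = 0
  · obtain ⟨j0, hj0⟩ := hN
    set τ := Real.sqrt (Δ ^ 2 - L) with hτ
    have hτ2 : τ ^ 2 = Δ ^ 2 - L := Real.sq_sqrt (by linarith)
    have hxj0 : x0 j0 = 0 := by rw [hx0]; simp [hj0]
    refine ⟨Function.update x0 j0 τ, ?_, ?_, hpsd⟩
    · have hupdate : ∀ i, (Function.update x0 j0 τ i) ^ 2
          = Function.update (fun i => x0 i ^ 2) j0 (τ ^ 2) i := by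
        intro i
        rcases eq_or_ne i j0 with rfl | h
        · simp
        · simp [Function.update_of_ne h]
      rw [Finset.sum_congr rfl fun i _ => hupdate i,
        Finset.sum_update_of_mem (Finset.mem_univ j0)]
      have herase : ∑ x ∈ Finset.univ \ {j0}, x0 x ^ 2 = ∑ x, x0 x ^ 2 := by
        rw [Finset.sdiff_singleton_eq_erase]
        exact Finset.sum_erase _ (by rw [hxj0]; ring)
      rw [herase, hτ2]
      show Δ ^ 2 - L + L = Δ ^ 2
      ring
    · intro i
      rcases eq_or_ne i j0 with rfl | hne
      · rw [Function.update_self, hj0, zero_mul, hclaim1 i hj0]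
        ring
      · rw [Function.update_of_ne hne]
        exact hx0eq i
  · push_neg at hN
    have hLeq : L = Δ ^ 2 := by
      obtain ⟨y, hy0, hyeq⟩ := hmem
      set c := (∑ j, gh j * y j) / Δ ^ 2 with hc
      have hcne : c ≠ 0 := by
        intro h0
        apply hy0
        funext i
        have h1 := hyeq i
        rw [h0, zero_mul] at h1
        have h2 : (d i + lam) ^ 2 ≠ 0 := pow_ne_zero 2 (hN i)
        simpa [Pi.zero_apply] using (mul_eq_zero.mp h1).resolve_left h2
      have hyi : ∀ i, y i = c * gh i / (d i + lam) ^ 2 := by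
        intro i
        have h2 : (d i + lam) ^ 2 ≠ 0 := pow_ne_zero 2 (hN i)
        rw [← hyeq i]
        exact (mul_div_cancel_left₀ _ h2).symm
      have hsum2 : ∑ j, gh j * y j = c * L := by
        rw [← hsumL, Finset.mul_sum]
        refine Finset.sum_congr rfl fun j _ => ?_
        rw [hyi j]
        ring
      have hsum1 : ∑ j, gh j * y j = c * Δ ^ 2 := by
        rw [hc, div_mul_cancel₀ _ hΔ2]
      exact mul_left_cancel₀ hcne (hsum2.symm.trans hsum1)
    refine ⟨x0, ?_, hx0eq, hpsd⟩
    rw [← hL]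
    exact hLeq

end Diag

section Matrixland

variable {n : ℕ} {A : Matrix (Fin n) (Fin n) ℝ} {g : Fin n → ℝ} {Δ : ℝ}

/-- KKT conditions imply global optimality on the sphere. -/
lemma kkt_global (hA : A.IsSymm) (lam : ℝ) (x y : Fin n → ℝ)
    (hpsd : (A + lam • (1 : Matrix (Fin n) (Fin n) ℝ)).PosSemidef)
    (hx : (A + lam • (1 : Matrix (Fin n) (Fin n) ℝ)) *ᵥ x = -g)
    (hy : y ⬝ᵥ y = x ⬝ᵥ x) :
    g ⬝ᵥ x + (1 / 2) * (x ⬝ᵥ (A *ᵥ x)) ≤ g ⬝ᵥ y + (1 / 2) * (y ⬝ᵥ (A *ᵥ y)) := by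
  set B := A + lam • (1 : Matrix (Fin n) (Fin n) ℝ) with hB
  have hBsymm : Bᵀ = B := by
    rw [hB, Matrix.transpose_add, Matrix.transpose_smul, Matrix.transpose_one, hA]
  have hsymmpair : ∀ u v : Fin n → ℝ, u ⬝ᵥ (B *ᵥ v) = (B *ᵥ u) ⬝ᵥ v := by
    intro u v
    rw [Matrix.dotProduct_mulVec]
    congr 1
    conv_lhs => rw [← hBsymm]
    rw [Matrix.vecMul_transpose]
  have hpsd2 : ∀ v : Fin n → ℝ, 0 ≤ v ⬝ᵥ (B *ᵥ v) := by
    intro v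
    simpa using hpsd.dotProduct_mulVec_nonneg v
  have a1 : x ⬝ᵥ (B *ᵥ x) = -(g ⬝ᵥ x) := by
    rw [hx, dotProduct_neg, dotProduct_comm]
  have a2 : x ⬝ᵥ (B *ᵥ y) = -(g ⬝ᵥ y) := by
    rw [hsymmpair x y, hx, neg_dotProduct]
  have a3 : y ⬝ᵥ (B *ᵥ x) = -(g ⬝ᵥ y) := by
    rw [hx, dotProduct_neg, dotProduct_comm]
  have b1 : x ⬝ᵥ (B *ᵥ x) = x ⬝ᵥ (A *ᵥ x) + lam * (x ⬝ᵥ x) := by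
    rw [hB, Matrix.add_mulVec, dotProduct_add, Matrix.smul_mulVec,
      Matrix.one_mulVec, dotProduct_smul]
    simp [smul_eq_mul]
  have b2 : y ⬝ᵥ (B *ᵥ y) = y ⬝ᵥ (A *ᵥ y) + lam * (y ⬝ᵥ y) := by
    rw [hB, Matrix.add_mulVec, dotProduct_add, Matrix.smul_mulVec,
      Matrix.one_mulVec, dotProduct_smul]
    simp [smul_eq_mul]
  have hexp : (y - x) ⬝ᵥ (B *ᵥ (y - x))
      = y ⬝ᵥ (B *ᵥ y) - y ⬝ᵥ (B *ᵥ x) - x ⬝ᵥ (B *ᵥ y) + x ⬝ᵥ (B *ᵥ x) := by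
    rw [Matrix.mulVec_sub, dotProduct_sub, sub_dotProduct,
      sub_dotProduct]
    ring
  have key := hpsd2 (y - x)
  rw [hexp] at key
  have hy' : lam * (y ⬝ᵥ y) = lam * (x ⬝ᵥ x) := by rw [hy]
  linarith

/-- det Qtilde = 0 iff the kernel condition holds. -/
lemma det_qtilde_iff (hΔ : 0 < Δ) (lam : ℝ) :
    (Qtilde n A g Δ lam).det = 0 ↔
      ∃ y : Fin n → ℝ, y ≠ 0 ∧
        (A + lam • 1) *ᵥ ((A + lam • 1) *ᵥ y) = ((g ⬝ᵥ y) / Δ ^ 2) • g := by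
  classical
  set B := A + lam • (1 : Matrix (Fin n) (Fin n) ℝ) with hB
  rw [← Matrix.exists_mulVec_eq_zero_iff]
  constructor
  · rintro ⟨v, hv0, hv⟩
    rw [Qtilde, Matrix.fromBlocks_mulVec] at hv
    have h1 : (-1 : Matrix (Fin n) (Fin n) ℝ) *ᵥ (v ∘ Sum.inl) + B *ᵥ (v ∘ Sum.inr) = 0 := by
      funext i; exact congrFun hv (Sum.inl i)
    have h2 : B *ᵥ (v ∘ Sum.inl) + (-((Δ ^ 2)⁻¹ • Matrix.vecMulVec g g)) *ᵥ (v ∘ Sum.inr)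
        = 0 := by
      funext i; exact congrFun hv (Sum.inr i)
    rw [Matrix.neg_mulVec, Matrix.one_mulVec, neg_add_eq_zero] at h1
    rw [Matrix.neg_mulVec, Matrix.smul_mulVec, vecMulVec_mulVec',
      add_neg_eq_zero] at h2
    refine ⟨v ∘ Sum.inr, ?_, ?_⟩
    · intro h0
      apply hv0
      funext s
      rcases s with i | i
      · have : v ∘ Sum.inl = B *ᵥ (v ∘ Sum.inr) := h1
        rw [h0, Matrix.mulVec_zero] at this
        exact congrFun this i
      · exact congrFun h0 i
    · rw [← h1, h2, smul_smul, div_eq_inv_mul]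
  · rintro ⟨y, hy0, hyeq⟩
    refine ⟨Sum.elim (B *ᵥ y) y, ?_, ?_⟩
    · intro h
      apply hy0
      funext i
      exact congrFun h (Sum.inr i)
    · rw [Qtilde, Matrix.fromBlocks_mulVec, Sum.elim_comp_inl, Sum.elim_comp_inr]
      have e1 : (-1 : Matrix (Fin n) (Fin n) ℝ) *ᵥ (B *ᵥ y) + B *ᵥ y = 0 := by
        rw [Matrix.neg_mulVec, Matrix.one_mulVec]
        exact neg_add_cancel _
      have e2 : B *ᵥ (B *ᵥ y) + (-((Δ ^ 2)⁻¹ • Matrix.vecMulVec g g)) *ᵥ y = 0 := by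
        rw [Matrix.neg_mulVec, Matrix.smul_mulVec, vecMulVec_mulVec', hyeq,
          smul_smul, div_eq_inv_mul]
        exact add_neg_cancel _
      rw [e1, e2]
      funext s
      rcases s with i | i <;> rfl

end Matrixland

/-- The multiplier of any global solution of the spherically constrained problem is the
largest real root of `det(Q̃(λ)) = 0` (in particular the root set is nonempty), and
conversely the largest real root `λ*` of `det(Q̃(λ)) = 0` is the multiplier of a global
solution `x*` (with `‖x*‖ = Δ`, `(A+λ*I)x* = −g`, `A+λ*I ⪰ 0`). -/
theorem stmt8 (n : ℕ) (hn : 1 ≤ n) (A : Matrix (Fin n) (Fin n) ℝ) (hA : A.IsSymm)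
    (g : Fin n → ℝ) (Δ : ℝ) (hΔ : 0 < Δ) :
    (∀ (x : Fin n → ℝ) (lam : ℝ),
        Real.sqrt (x ⬝ᵥ x) = Δ →
        (∀ y : Fin n → ℝ, Real.sqrt (y ⬝ᵥ y) = Δ →
            g ⬝ᵥ x + (1 / 2) * (x ⬝ᵥ (A *ᵥ x)) ≤ g ⬝ᵥ y + (1 / 2) * (y ⬝ᵥ (A *ᵥ y))) →
        (A + lam • (1 : Matrix (Fin n) (Fin n) ℝ)) *ᵥ x = -g →
        (A + lam • (1 : Matrix (Fin n) (Fin n) ℝ)).PosSemidef →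
        IsGreatest {μ : ℝ | (Qtilde n A g Δ μ).det = 0} lam) ∧
      (∀ lam : ℝ, IsGreatest {μ : ℝ | (Qtilde n A g Δ μ).det = 0} lam →
        ∃ x : Fin n → ℝ,
          Real.sqrt (x ⬝ᵥ x) = Δ ∧
          (A + lam • (1 : Matrix (Fin n) (Fin n) ℝ)) *ᵥ x = -g ∧
          (A + lam • (1 : Matrix (Fin n) (Fin n) ℝ)).PosSemidef ∧
          ∀ y : Fin n → ℝ, Real.sqrt (y ⬝ᵥ y) = Δ →
            g ⬝ᵥ x + (1 / 2) * (x ⬝ᵥ (A *ᵥ x)) ≤ g ⬝ᵥ y + (1 / 2) * (y ⬝ᵥ (A *ᵥ y))) := by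
  classical
  have hAh : A.IsHermitian := by
    rwa [Matrix.IsHermitian, Matrix.conjTranspose_eq_transpose_of_trivial]
  set U : Matrix (Fin n) (Fin n) ℝ := (hAh.eigenvectorUnitary : Matrix (Fin n) (Fin n) ℝ) with hUdef
  set d : Fin n → ℝ := hAh.eigenvalues with hddef
  have hU1 : U * star U = 1 := Matrix.mem_unitaryGroup_iff.mp hAh.eigenvectorUnitary.2
  have hU2 : star U * U = 1 := Matrix.mem_unitaryGroup_iff'.mp hAh.eigenvectorUnitary.2
  have hspec : A = U * Matrix.diagonal d * star U := by
    have h := hAh.spectral_theorem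
    rwa [RCLike.ofReal_real_eq_id, Function.id_comp] at h
  have hUcan : ∀ a : Fin n → ℝ, star U *ᵥ (U *ᵥ a) = a := by
    intro a; rw [Matrix.mulVec_mulVec, hU2, Matrix.one_mulVec]
  have hUsur : ∀ w : Fin n → ℝ, U *ᵥ (star U *ᵥ w) = w := by
    intro w; rw [Matrix.mulVec_mulVec, hU1, Matrix.one_mulVec]
  have hU0 : ∀ a : Fin n → ℝ, U *ᵥ a = 0 → a = 0 := by
    intro a h; rw [← hUcan a, h, Matrix.mulVec_zero]
  have hAU : A * U = U * Matrix.diagonal d := by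
    rw [hspec, mul_assoc, hU2, mul_one]
  have hmv : ∀ (mu : ℝ) (v : Fin n → ℝ),
      (A + mu • (1 : Matrix (Fin n) (Fin n) ℝ)) *ᵥ (U *ᵥ v)
        = U *ᵥ (fun i => (d i + mu) * v i) := by
    intro mu v
    rw [Matrix.add_mulVec, Matrix.smul_mulVec, Matrix.one_mulVec,
      Matrix.mulVec_mulVec, hAU, ← Matrix.mulVec_mulVec, ← Matrix.mulVec_smul,
      ← Matrix.mulVec_add]
    have hfun : Matrix.diagonal d *ᵥ v + mu • v = fun i => (d i + mu) * v i := by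
      funext i
      rw [Pi.add_apply, Matrix.mulVec_diagonal, Pi.smul_apply, smul_eq_mul]
      ring
    rw [hfun]
  have hUT : Uᵀ = star U := by
    rw [Matrix.star_eq_conjTranspose, Matrix.conjTranspose_eq_transpose_of_trivial]
  have hdot : ∀ a b : Fin n → ℝ, (U *ᵥ a) ⬝ᵥ (U *ᵥ b) = a ⬝ᵥ b := by
    intro a b
    rw [Matrix.dotProduct_mulVec]
    congr 1
    rw [← Matrix.mulVec_transpose, hUT, hUcan]
  set gh : Fin n → ℝ := star U *ᵥ g with hghdef
  have hgU : U *ᵥ gh = g := hUsur g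
  have hpsd_iff : ∀ mu : ℝ,
      (A + mu • (1 : Matrix (Fin n) (Fin n) ℝ)).PosSemidef ↔ (∀ i, 0 ≤ d i + mu) := by
    intro mu
    constructor
    · intro h i
      have h2 := h.dotProduct_mulVec_nonneg (U *ᵥ Pi.single i 1)
      rw [star_trivial, hmv, hdot] at h2
      have h3 : (Pi.single i 1 : Fin n → ℝ) ⬝ᵥ
          (fun j => (d j + mu) * (Pi.single i 1 : Fin n → ℝ) j) = d i + mu := by
        have : ∑ j, (Pi.single i 1 : Fin n → ℝ) j * ((d j + mu)
            * (Pi.single i 1 : Fin n → ℝ) j) = d i + mu := by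
          simp [Pi.single_apply]
        exact this
      rwa [h3] at h2
    · intro h
      refine Matrix.PosSemidef.of_dotProduct_mulVec_nonneg ?_ ?_
      · rw [Matrix.IsHermitian, Matrix.conjTranspose_eq_transpose_of_trivial,
          Matrix.transpose_add, Matrix.transpose_smul, Matrix.transpose_one, hA]
      · intro x
        rw [star_trivial]
        have hx : x = U *ᵥ (star U *ᵥ x) := (hUsur x).symm
        rw [hx, hmv, hdot]
        have : (star U *ᵥ x) ⬝ᵥ (fun i => (d i + mu) * (star U *ᵥ x) i)
            = ∑ i, (d i + mu) * ((star U *ᵥ x) i) ^ 2 :=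
          Finset.sum_congr rfl fun i _ => by ring
        rw [this]
        exact Finset.sum_nonneg fun i _ => mul_nonneg (h i) (sq_nonneg _)
  have hdet_iff : ∀ mu : ℝ, (Qtilde n A g Δ mu).det = 0 ↔ mu ∈ Tset n d gh Δ := by
    intro mu
    rw [det_qtilde_iff hΔ]
    constructor
    · rintro ⟨y, hy0, hyeq⟩
      refine ⟨star U *ᵥ y, fun h0 => hy0 ?_, fun i => ?_⟩
      · rw [← hUsur y, h0, Matrix.mulVec_zero]
      · rw [show y = U *ᵥ (star U *ᵥ y) from (hUsur y).symm, hmv, hmv, ← hgU, hdot,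
          ← Matrix.mulVec_smul] at hyeq
        have heq2 : (fun i => (d i + mu) * ((d i + mu) * (star U *ᵥ y) i))
            = ((gh ⬝ᵥ (star U *ᵥ y)) / Δ ^ 2) • gh := by
          have h1 := congrArg (fun w => star U *ᵥ w) hyeq
          simpa [hUcan] using h1
        have h3 := congrFun heq2 i
        simp only [Pi.smul_apply, smul_eq_mul] at h3
        have h4 : gh ⬝ᵥ (star U *ᵥ y) = ∑ j, gh j * (star U *ᵥ y) j := rfl
        rw [h4] at h3
        linear_combination h3
    · rintro ⟨a, ha0, haeq⟩
      refine ⟨U *ᵥ a, fun h0 => ha0 (hU0 a h0), ?_⟩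
      rw [hmv, hmv, ← hgU, hdot, ← Matrix.mulVec_smul]
      have h5 : (fun i => (d i + mu) * ((d i + mu) * a i)) = ((gh ⬝ᵥ a) / Δ ^ 2) • gh := by
        funext i
        simp only [Pi.smul_apply, smul_eq_mul]
        have h4 : gh ⬝ᵥ a = ∑ j, gh j * a j := rfl
        rw [h4]
        linear_combination haeq i
      rw [h5]
  have hsets : {μ : ℝ | (Qtilde n A g Δ μ).det = 0} = Tset n d gh Δ := Set.ext hdet_iff
  have hsqrt_inv : ∀ v : Fin n → ℝ, Real.sqrt (v ⬝ᵥ v) = Δ → v ⬝ᵥ v = Δ ^ 2 := by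
    intro v hv
    have h2 : 0 ≤ v ⬝ᵥ v := by
      have : v ⬝ᵥ v = ∑ i, v i * v i := rfl
      rw [this]
      exact Finset.sum_nonneg fun i _ => mul_self_nonneg _
    rw [← hv, Real.sq_sqrt h2]
  have hdotsq : ∀ a : Fin n → ℝ, a ⬝ᵥ a = ∑ i, a i ^ 2 := by
    intro a
    have : a ⬝ᵥ a = ∑ i, a i * a i := rfl
    rw [this]
    exact Finset.sum_congr rfl fun i _ => (sq (a i)).symm
  constructor
  · intro x lam hxnorm _ hxeq hxpsd
    rw [hsets]
    set a := star U *ᵥ x with ha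
    have hxa : U *ᵥ a = x := hUsur x
    have hnorm2 : ∑ i, a i ^ 2 = Δ ^ 2 := by
      rw [← hdotsq, ← hdot a a, hxa]
      exact hsqrt_inv x hxnorm
    have heq' : ∀ i, (d i + lam) * a i = -gh i := by
      have h1 : (A + lam • (1 : Matrix (Fin n) (Fin n) ℝ)) *ᵥ (U *ᵥ a) = U *ᵥ (-gh) := by
        rw [hxa, hxeq, Matrix.mulVec_neg, hgU]
      rw [hmv] at h1
      have h2 : (fun i => (d i + lam) * a i) = -gh := by
        have h3 := congrArg (fun w => star U *ᵥ w) h1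
        simpa [hUcan] using h3
      intro i
      exact congrFun h2 i
    exact diag_part1 hΔ a lam hnorm2 heq' ((hpsd_iff lam).mp hxpsd)
  · intro lam hgr
    rw [hsets] at hgr
    obtain ⟨a, hnorm2, heq', hpsd'⟩ := diag_part2 hn hΔ lam hgr
    have hxeqm : (A + lam • (1 : Matrix (Fin n) (Fin n) ℝ)) *ᵥ (U *ᵥ a) = -g := by
      rw [hmv, ← hgU, ← Matrix.mulVec_neg]
      exact congrArg (fun w => U *ᵥ w) (funext heq')
    have hpsdm := (hpsd_iff lam).mpr hpsd'
    have hnormm : (U *ᵥ a) ⬝ᵥ (U *ᵥ a) = Δ ^ 2 := by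
      rw [hdot, hdotsq]
      exact hnorm2
    refine ⟨U *ᵥ a, ?_, hxeqm, hpsdm, ?_⟩
    · rw [hnormm, Real.sqrt_sq hΔ.le]
    · intro y hynorm
      exact kkt_global hA lam (U *ᵥ a) y hpsdm hxeqm
        (by rw [hsqrt_inv y hynorm, hnormm])
end

section
/- Let a and b be elements of a real inner product space and let τ ∈ (1,2). Then ‖(1−τ)a − τb‖² ≤ (τ−1)‖a‖² + (τ²/(2−τ))‖b‖². -/
/-- For elements `a, b` of a real inner product space and `τ ∈ (1,2)`,
`‖(1−τ)a − τb‖² ≤ (τ−1)‖a‖² + (τ²/(2−τ))‖b‖²`. -/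
theorem stmt9 {E : Type*} [NormedAddCommGroup E] [InnerProductSpace ℝ E]
    (a b : E) (τ : ℝ) (hτ : τ ∈ Set.Ioo (1 : ℝ) 2) :
    ‖(1 - τ) • a - τ • b‖ ^ 2 ≤ (τ - 1) * ‖a‖ ^ 2 + (τ ^ 2 / (2 - τ)) * ‖b‖ ^ 2 := by
  obtain ⟨h1, h2⟩ := hτ
  have h2' : (0:ℝ) < 2 - τ := by linarith
  have e1 := @norm_sub_sq_real _ _ _ ((1-τ) • a) (τ • b)
  have e2 := @norm_sub_sq_real _ _ _ ((2-τ) • a) (τ • b)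
  have k : (0:ℝ) ≤ ‖(2-τ) • a - τ • b‖ ^ 2 := by positivity
  simp only [inner_smul_left, inner_smul_right, norm_smul, mul_pow, RCLike.conj_to_real,
    Real.norm_eq_abs, sq_abs] at e1 e2
  rw [e1]
  rw [e2] at k
  rw [← sub_nonneg]
  have expand : (τ - 1) * ‖a‖ ^ 2 + τ ^ 2 / (2 - τ) * ‖b‖ ^ 2 -
      ((1 - τ) ^ 2 * ‖a‖ ^ 2 - 2 * (τ * ((1 - τ) * (inner ℝ a b : ℝ))) + τ ^ 2 * ‖b‖ ^ 2)
      = (τ - 1) / (2 - τ) *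
        ((2-τ)^2 * ‖a‖^2 - 2 * (τ * ((2 - τ) * (inner ℝ a b : ℝ))) + τ^2 * ‖b‖^2) := by
    field_simp
    ring
  rw [expand]
  exact mul_nonneg (div_nonneg (by linarith) h2'.le) k
end

section
/- Let a and b be elements of a real inner product space, let τ ∈ (0,2), and set c = (1−τ)a − τb. Then (1−|1−τ|)‖c‖² ≤ |1−τ|(‖a‖² − ‖c‖²) + (τ²/(1−|1−τ|))‖b‖². -/
/-- For elements `a, b` of a real inner product space, `τ ∈ (0,2)` and
`c = (1−τ)a − τb`, one has
`(1−|1−τ|)‖c‖² ≤ |1−τ|(‖a‖² − ‖c‖²) + (τ²/(1−|1−τ|))‖b‖²`. -/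
theorem stmt10 {E : Type*} [NormedAddCommGroup E] [InnerProductSpace ℝ E]
    (a b : E) (τ : ℝ) (hτ : τ ∈ Set.Ioo (0 : ℝ) 2)
    (c : E) (hc : c = (1 - τ) • a - τ • b) :
    (1 - |1 - τ|) * ‖c‖ ^ 2 ≤
      |1 - τ| * (‖a‖ ^ 2 - ‖c‖ ^ 2) + (τ ^ 2 / (1 - |1 - τ|)) * ‖b‖ ^ 2 := by
  obtain ⟨h0, h2⟩ := hτ
  set s := |1 - τ| with hs
  have hs0 : 0 ≤ s := abs_nonneg _
  have hs1 : s < 1 := abs_lt.2 ⟨by linarith, by linarith⟩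
  have hpos : 0 < 1 - s := by linarith
  have htri : ‖c‖ ≤ s * ‖a‖ + τ * ‖b‖ := by
    rw [hc]
    calc ‖(1 - τ) • a - τ • b‖ ≤ ‖(1 - τ) • a‖ + ‖τ • b‖ := norm_sub_le _ _
    _ = s * ‖a‖ + τ * ‖b‖ := by
        rw [norm_smul, norm_smul, Real.norm_eq_abs, Real.norm_eq_abs, abs_of_pos h0]
  have hsq : ‖c‖^2 ≤ (s * ‖a‖ + τ * ‖b‖)^2 := by
    nlinarith [norm_nonneg c, mul_nonneg (mul_nonneg hs0 (norm_nonneg a)) (mul_nonneg h0.le (norm_nonneg b))]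
  rw [div_mul_eq_mul_div, ← sub_le_iff_le_add', le_div_iff₀ hpos]
  nlinarith [hsq, sq_nonneg ((1 - s) * ‖a‖ - τ * ‖b‖), mul_nonneg hs0 (sq_nonneg ((1 - s) * ‖a‖ - τ * ‖b‖)), norm_nonneg c, mul_pos hpos hpos]
end

section
/- (Lemma on the dual residual bound.) Under the stated assumptions, for all k ≥ 1 the dual iterates satisfy ‖Δλ^{k+1}‖² ≤ α₁(‖Δλ^k‖² − ‖Δλ^{k+1}‖²) + τ α₂ [ (7L_f²+4L_g²)‖Δx₁^{k+1}‖² + ⟨Δx₂^{k+1}, (7L_f² I + 4L_g² I + 4H₂ᵀH₂)Δx₂^{k+1}⟩ + 4⟨Δx₂^k, H₂ᵀH₂ Δx₂^k⟩ + 3L_f²‖Δx₃^{k+1}‖² + 4L_f²‖Δx₃^k‖² + ⟨Δx₄^{k+1}, (3L_f² I + 3H₄ᵀH₄)Δx₄^{k+1}⟩ + ⟨Δx₄^k, (4L_f² I + 3H₄ᵀH₄)Δx₄^k⟩ ]. -/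
open scoped RealInnerProductSpace
open Matrix

noncomputable section

/-- `ℝ^{4n}`, regarded as `n` blocks of `ℝ⁴`. -/
abbrev E4 (n : ℕ) := EuclideanSpace ℝ (Fin n × Fin 4)

/-- `ℝ^{3n}`, regarded as `n` blocks of `ℝ³`. -/
abbrev E3 (n : ℕ) := EuclideanSpace ℝ (Fin n × Fin 3)

/-- Partial gradient of `f` w.r.t. its first block. -/
def grad1f {n : ℕ} (f : E4 n → E4 n → E3 n → E3 n → ℝ) (a b : E4 n) (c d : E3 n) : E4 n :=
  gradient (fun y => f y b c d) a

/-- Partial gradient of `f` w.r.t. its second block. -/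
def grad2f {n : ℕ} (f : E4 n → E4 n → E3 n → E3 n → ℝ) (a b : E4 n) (c d : E3 n) : E4 n :=
  gradient (fun y => f a y c d) b

/-- Partial gradient of `f` w.r.t. its third block. -/
def grad3f {n : ℕ} (f : E4 n → E4 n → E3 n → E3 n → ℝ) (a b : E4 n) (c d : E3 n) : E3 n :=
  gradient (fun y => f a b y d) c

/-- Partial gradient of `f` w.r.t. its fourth block. -/
def grad4f {n : ℕ} (f : E4 n → E4 n → E3 n → E3 n → ℝ) (a b : E4 n) (c d : E3 n) : E3 n :=
  gradient (fun y => f a b c y) d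

/-- Partial gradient of `g` w.r.t. its first block. -/
def grad1g {n : ℕ} (g : E4 n → E4 n → ℝ) (a b : E4 n) : E4 n :=
  gradient (fun y => g y b) a

/-- Partial gradient of `g` w.r.t. its second block. -/
def grad2g {n : ℕ} (g : E4 n → E4 n → ℝ) (a b : E4 n) : E4 n :=
  gradient (fun y => g a y) b

/-- The quadratic form `‖v‖²_H = ⟨v, Hv⟩` of a matrix `H`. -/
def qf {ι : Type*} [Fintype ι] [DecidableEq ι] (H : Matrix ι ι ℝ)
    (v : EuclideanSpace ℝ ι) : ℝ :=
  ⟪v, Matrix.toEuclideanLin H v⟫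

lemma my_sq3 {E : Type*} [SeminormedAddCommGroup E] (a b c : E) :
    ‖a + b + c‖ ^ 2 ≤ 3 * (‖a‖ ^ 2 + ‖b‖ ^ 2 + ‖c‖ ^ 2) := by
  have h : ‖a + b + c‖ ≤ ‖a‖ + ‖b‖ + ‖c‖ := norm_add₃_le
  nlinarith [sq_nonneg (‖a‖ - ‖b‖), sq_nonneg (‖a‖ - ‖c‖), sq_nonneg (‖b‖ - ‖c‖),
    norm_nonneg (a + b + c), norm_nonneg a, norm_nonneg b, norm_nonneg c]

lemma my_sq4 {E : Type*} [SeminormedAddCommGroup E] (a b c d : E) :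
    ‖a + b + c + d‖ ^ 2 ≤ 4 * (‖a‖ ^ 2 + ‖b‖ ^ 2 + ‖c‖ ^ 2 + ‖d‖ ^ 2) := by
  have h : ‖a + b + c + d‖ ≤ ‖a‖ + ‖b‖ + ‖c‖ + ‖d‖ :=
    le_trans (norm_add_le _ _) (by linarith [norm_add₃_le (a := a) (b := b) (c := c)])
  nlinarith [sq_nonneg (‖a‖ - ‖b‖), sq_nonneg (‖a‖ - ‖c‖), sq_nonneg (‖a‖ - ‖d‖),
    sq_nonneg (‖b‖ - ‖c‖), sq_nonneg (‖b‖ - ‖d‖), sq_nonneg (‖c‖ - ‖d‖),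
    norm_nonneg (a + b + c + d), norm_nonneg a, norm_nonneg b, norm_nonneg c, norm_nonneg d]

lemma my_qf {ι : Type*} [Fintype ι] [DecidableEq ι] (H : Matrix ι ι ℝ)
    (v : EuclideanSpace ℝ ι) :
    qf (Hᵀ * H) v = ‖Matrix.toEuclideanLin H v‖ ^ 2 := by
  have h1 : Matrix.toEuclideanLin (Hᵀ * H) v
      = Matrix.toEuclideanLin Hᵀ (Matrix.toEuclideanLin H v) := by
    simp [Matrix.toEuclideanLin_apply, Matrix.mulVec_mulVec]
  rw [qf, h1, ← Matrix.conjTranspose_eq_transpose_of_trivial,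
    Matrix.toEuclideanLin_conjTranspose_eq_adjoint, LinearMap.adjoint_inner_right,
    real_inner_self_eq_norm_sq]

lemma my_key (θ τ A B C : ℝ) (hθ0 : 0 ≤ θ) (hθ1 : θ ≤ 1)
    (hA : 0 ≤ A) (h : A ≤ θ * B + τ * C) :
    (1 - θ) * A ^ 2 ≤ θ * (1 - θ) * B ^ 2 + τ ^ 2 * C ^ 2 := by
  have h2 : A ^ 2 ≤ (θ * B + τ * C) ^ 2 := pow_le_pow_left₀ hA h 2
  nlinarith [mul_nonneg hθ0 (sq_nonneg ((1 - θ) * B - τ * C)),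
    mul_le_mul_of_nonneg_left h2 (by linarith : (0:ℝ) ≤ 1 - θ)]

set_option maxHeartbeats 1000000 in
/-- Lemma 5.1 (dual residual bound): for all `k ≥ 1`,
`‖Δλ^{k+1}‖² ≤ α₁(‖Δλ^k‖² − ‖Δλ^{k+1}‖²) + τα₂[⋯]`, with
`α₁ = |1−τ|/(1−|1−τ|)` and `α₂ = τ/(1−|1−τ|)²`. -/
theorem stmt14 (n : ℕ)
    (f : E4 n → E4 n → E3 n → E3 n → ℝ) (g : E4 n → E4 n → ℝ)
    (hf : ContDiff ℝ 1 fun p : (E4 n × E4 n) × E3 n × E3 n => f p.1.1 p.1.2 p.2.1 p.2.2)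
    (hg : ContDiff ℝ 1 fun p : E4 n × E4 n => g p.1 p.2)
    (Lf Lg : ℝ) (hLf : 0 < Lf) (hLg : 0 < Lg)
    (hfLip : ∀ a b : E4 n, ∀ c d : E3 n, ∀ a' b' : E4 n, ∀ c' d' : E3 n,
        Real.sqrt (‖grad1f f a b c d - grad1f f a' b' c' d'‖ ^ 2 +
            ‖grad2f f a b c d - grad2f f a' b' c' d'‖ ^ 2 +
            ‖grad3f f a b c d - grad3f f a' b' c' d'‖ ^ 2 +
            ‖grad4f f a b c d - grad4f f a' b' c' d'‖ ^ 2) ≤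
          Lf * Real.sqrt (‖a - a'‖ ^ 2 + ‖b - b'‖ ^ 2 + ‖c - c'‖ ^ 2 + ‖d - d'‖ ^ 2))
    (hgLip : ∀ a b a' b' : E4 n,
        Real.sqrt (‖grad1g g a b - grad1g g a' b'‖ ^ 2 +
            ‖grad2g g a b - grad2g g a' b'‖ ^ 2) ≤
          Lg * Real.sqrt (‖a - a'‖ ^ 2 + ‖b - b'‖ ^ 2))
    (β τ : ℝ) (hβ : 0 < β) (hτ : τ ∈ Set.Ioo (0 : ℝ) 2)
    (H2 : Matrix (Fin n × Fin 4) (Fin n × Fin 4) ℝ)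
    (H4 : Matrix (Fin n × Fin 3) (Fin n × Fin 3) ℝ)
    (hH2 : H2.PosDef) (hH4 : H4.PosDef)
    (x1 x2 : ℕ → E4 n) (x3 x4 : ℕ → E3 n)
    (l1 : ℕ → E4 n) (l2 : ℕ → E3 n)
    (hbdd : ∃ R : ℝ, ∀ k, ‖x1 k‖ ≤ R ∧ ‖x2 k‖ ≤ R ∧ ‖x3 k‖ ≤ R ∧ ‖x4 k‖ ≤ R ∧
        ‖l1 k‖ ≤ R ∧ ‖l2 k‖ ≤ R)
    (hfoc1 : ∀ k, 0 =
        grad2f f (x1 (k + 1)) (x2 (k + 1)) (x3 k) (x4 k) +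
          grad2g g (x1 (k + 1)) (x2 (k + 1)) + l1 k -
          β • (x1 (k + 1) - x2 (k + 1)) +
          Matrix.toEuclideanLin H2 (x2 (k + 1) - x2 k))
    (hfoc2 : ∀ k, 0 =
        grad4f f (x1 (k + 1)) (x2 (k + 1)) (x3 (k + 1)) (x4 (k + 1)) + l2 k -
          β • (x3 (k + 1) - x4 (k + 1)) +
          Matrix.toEuclideanLin H4 (x4 (k + 1) - x4 k))
    (hdual1 : ∀ k, l1 (k + 1) = l1 k - (τ * β) • (x1 (k + 1) - x2 (k + 1)))
    (hdual2 : ∀ k, l2 (k + 1) = l2 k - (τ * β) • (x3 (k + 1) - x4 (k + 1)))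
    (α1 α2 : ℝ)
    (hα1 : α1 = |1 - τ| / (1 - |1 - τ|))
    (hα2 : α2 = τ / (1 - |1 - τ|) ^ 2) :
    ∀ k, 1 ≤ k →
      ‖l1 (k + 1) - l1 k‖ ^ 2 + ‖l2 (k + 1) - l2 k‖ ^ 2 ≤
        α1 * ((‖l1 k - l1 (k - 1)‖ ^ 2 + ‖l2 k - l2 (k - 1)‖ ^ 2) -
            (‖l1 (k + 1) - l1 k‖ ^ 2 + ‖l2 (k + 1) - l2 k‖ ^ 2)) +
          τ * α2 *
            ((7 * Lf ^ 2 + 4 * Lg ^ 2) * ‖x1 (k + 1) - x1 k‖ ^ 2 +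
              3 * Lf ^ 2 * ‖x3 (k + 1) - x3 k‖ ^ 2 +
              4 * Lf ^ 2 * ‖x3 k - x3 (k - 1)‖ ^ 2 +
              ((7 * Lf ^ 2 + 4 * Lg ^ 2) * ‖x2 (k + 1) - x2 k‖ ^ 2 +
                4 * qf (H2ᵀ * H2) (x2 (k + 1) - x2 k)) +
              4 * qf (H2ᵀ * H2) (x2 k - x2 (k - 1)) +
              (3 * Lf ^ 2 * ‖x4 (k + 1) - x4 k‖ ^ 2 +
                3 * qf (H4ᵀ * H4) (x4 (k + 1) - x4 k)) +
              (4 * Lf ^ 2 * ‖x4 k - x4 (k - 1)‖ ^ 2 +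
                3 * qf (H4ᵀ * H4) (x4 k - x4 (k - 1)))) := by
  -- Lipschitz bounds for single partial gradients
  have hLf2 : ∀ a b : E4 n, ∀ c d : E3 n, ∀ a' b' : E4 n, ∀ c' d' : E3 n,
      ‖grad2f f a b c d - grad2f f a' b' c' d'‖ ^ 2 ≤
        Lf ^ 2 * (‖a - a'‖ ^ 2 + ‖b - b'‖ ^ 2 + ‖c - c'‖ ^ 2 + ‖d - d'‖ ^ 2) := by
    intro a b c d a' b' c' d'
    have h := hfLip a b c d a' b' c' d'
    have hsum : ‖grad1f f a b c d - grad1f f a' b' c' d'‖ ^ 2 +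
        ‖grad2f f a b c d - grad2f f a' b' c' d'‖ ^ 2 +
        ‖grad3f f a b c d - grad3f f a' b' c' d'‖ ^ 2 +
        ‖grad4f f a b c d - grad4f f a' b' c' d'‖ ^ 2 ≤
        Lf ^ 2 * (‖a - a'‖ ^ 2 + ‖b - b'‖ ^ 2 + ‖c - c'‖ ^ 2 + ‖d - d'‖ ^ 2) := by
      have h2 := pow_le_pow_left₀ (Real.sqrt_nonneg _) h 2
      rwa [Real.sq_sqrt (by positivity), mul_pow, Real.sq_sqrt (by positivity)] at h2
    nlinarith [sq_nonneg ‖grad1f f a b c d - grad1f f a' b' c' d'‖,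
      sq_nonneg ‖grad3f f a b c d - grad3f f a' b' c' d'‖,
      sq_nonneg ‖grad4f f a b c d - grad4f f a' b' c' d'‖]
  have hLf4 : ∀ a b : E4 n, ∀ c d : E3 n, ∀ a' b' : E4 n, ∀ c' d' : E3 n,
      ‖grad4f f a b c d - grad4f f a' b' c' d'‖ ^ 2 ≤
        Lf ^ 2 * (‖a - a'‖ ^ 2 + ‖b - b'‖ ^ 2 + ‖c - c'‖ ^ 2 + ‖d - d'‖ ^ 2) := by
    intro a b c d a' b' c' d'
    have h := hfLip a b c d a' b' c' d'
    have hsum : ‖grad1f f a b c d - grad1f f a' b' c' d'‖ ^ 2 +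
        ‖grad2f f a b c d - grad2f f a' b' c' d'‖ ^ 2 +
        ‖grad3f f a b c d - grad3f f a' b' c' d'‖ ^ 2 +
        ‖grad4f f a b c d - grad4f f a' b' c' d'‖ ^ 2 ≤
        Lf ^ 2 * (‖a - a'‖ ^ 2 + ‖b - b'‖ ^ 2 + ‖c - c'‖ ^ 2 + ‖d - d'‖ ^ 2) := by
      have h2 := pow_le_pow_left₀ (Real.sqrt_nonneg _) h 2
      rwa [Real.sq_sqrt (by positivity), mul_pow, Real.sq_sqrt (by positivity)] at h2
    nlinarith [sq_nonneg ‖grad1f f a b c d - grad1f f a' b' c' d'‖,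
      sq_nonneg ‖grad2f f a b c d - grad2f f a' b' c' d'‖,
      sq_nonneg ‖grad3f f a b c d - grad3f f a' b' c' d'‖]
  have hLg2 : ∀ a b a' b' : E4 n,
      ‖grad2g g a b - grad2g g a' b'‖ ^ 2 ≤ Lg ^ 2 * (‖a - a'‖ ^ 2 + ‖b - b'‖ ^ 2) := by
    intro a b a' b'
    have h := hgLip a b a' b'
    have hsum : ‖grad1g g a b - grad1g g a' b'‖ ^ 2 + ‖grad2g g a b - grad2g g a' b'‖ ^ 2 ≤
        Lg ^ 2 * (‖a - a'‖ ^ 2 + ‖b - b'‖ ^ 2) := by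
      have h2 := pow_le_pow_left₀ (Real.sqrt_nonneg _) h 2
      rwa [Real.sq_sqrt (by positivity), mul_pow, Real.sq_sqrt (by positivity)] at h2
    nlinarith [sq_nonneg ‖grad1g g a b - grad1g g a' b'‖]
  -- the "implicit dual" vectors
  obtain ⟨w1, hw1⟩ : ∃ w : ℕ → E4 n, ∀ j, w j =
      grad2f f (x1 (j + 1)) (x2 (j + 1)) (x3 j) (x4 j) +
        grad2g g (x1 (j + 1)) (x2 (j + 1)) +
        Matrix.toEuclideanLin H2 (x2 (j + 1) - x2 j) := ⟨_, fun j => rfl⟩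
  obtain ⟨w2, hw2⟩ : ∃ w : ℕ → E3 n, ∀ j, w j =
      grad4f f (x1 (j + 1)) (x2 (j + 1)) (x3 (j + 1)) (x4 (j + 1)) +
        Matrix.toEuclideanLin H4 (x4 (j + 1) - x4 j) := ⟨_, fun j => rfl⟩
  have hl1 : ∀ j, l1 (j + 1) = l1 j - τ • (w1 j + l1 j) := by
    intro j
    have h0 := (hfoc1 j).symm
    rw [sub_add_eq_add_sub, eq_comm, eq_sub_iff_add_eq, zero_add] at h0
    -- h0 : β • (x1 (j+1) - x2 (j+1)) = grad2f .. + grad2g .. + l1 j + H2 ..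
    have hx : β • (x1 (j + 1) - x2 (j + 1)) = w1 j + l1 j := by
      rw [h0, hw1 j]; abel
    rw [hdual1 j, mul_smul, hx]
  have hl2 : ∀ j, l2 (j + 1) = l2 j - τ • (w2 j + l2 j) := by
    intro j
    have h0 := (hfoc2 j).symm
    rw [sub_add_eq_add_sub, eq_comm, eq_sub_iff_add_eq, zero_add] at h0
    have hx : β • (x3 (j + 1) - x4 (j + 1)) = w2 j + l2 j := by
      rw [h0, hw2 j]; abel
    rw [hdual2 j, mul_smul, hx]
  intro k hk
  obtain ⟨m, rfl⟩ : ∃ m, k = m + 1 := ⟨k - 1, (Nat.succ_pred_eq_of_pos hk).symm⟩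
  simp only [Nat.add_sub_cancel]
  -- recursion for dual differences
  have hrec1 : l1 (m + 1 + 1) - l1 (m + 1) =
      (1 - τ) • (l1 (m + 1) - l1 m) - τ • (w1 (m + 1) - w1 m) := by
    rw [hl1 (m + 1), hl1 m]; module
  have hrec2 : l2 (m + 1 + 1) - l2 (m + 1) =
      (1 - τ) • (l2 (m + 1) - l2 m) - τ • (w2 (m + 1) - w2 m) := by
    rw [hl2 (m + 1), hl2 m]; module
  set θ := |1 - τ| with hθdef
  have hθ0 : 0 ≤ θ := abs_nonneg _
  have hθlt : θ < 1 := abs_lt.mpr ⟨by linarith [hτ.2], by linarith [hτ.1]⟩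
  have hτ0 : 0 < τ := hτ.1
  have hA1 : ‖l1 (m + 1 + 1) - l1 (m + 1)‖ ≤
      θ * ‖l1 (m + 1) - l1 m‖ + τ * ‖w1 (m + 1) - w1 m‖ := by
    rw [hrec1]
    refine le_trans (norm_sub_le _ _) ?_
    rw [norm_smul, norm_smul, Real.norm_eq_abs, Real.norm_eq_abs, abs_of_pos hτ0]
  have hA2 : ‖l2 (m + 1 + 1) - l2 (m + 1)‖ ≤
      θ * ‖l2 (m + 1) - l2 m‖ + τ * ‖w2 (m + 1) - w2 m‖ := by
    rw [hrec2]
    refine le_trans (norm_sub_le _ _) ?_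
    rw [norm_smul, norm_smul, Real.norm_eq_abs, Real.norm_eq_abs, abs_of_pos hτ0]
  have key1 := my_key θ τ _ _ _ hθ0 hθlt.le (norm_nonneg _) hA1
  have key2 := my_key θ τ _ _ _ hθ0 hθlt.le (norm_nonneg _) hA2
  -- bounds on ‖Δw‖²
  have hsplit1 : w1 (m + 1) - w1 m =
      (grad2f f (x1 (m + 1 + 1)) (x2 (m + 1 + 1)) (x3 (m + 1)) (x4 (m + 1)) -
        grad2f f (x1 (m + 1)) (x2 (m + 1)) (x3 m) (x4 m)) +
      (grad2g g (x1 (m + 1 + 1)) (x2 (m + 1 + 1)) - grad2g g (x1 (m + 1)) (x2 (m + 1))) +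
      Matrix.toEuclideanLin H2 (x2 (m + 1 + 1) - x2 (m + 1)) +
      (-(Matrix.toEuclideanLin H2 (x2 (m + 1) - x2 m))) := by
    rw [hw1 (m + 1), hw1 m]; abel
  have hsplit2 : w2 (m + 1) - w2 m =
      (grad4f f (x1 (m + 1 + 1)) (x2 (m + 1 + 1)) (x3 (m + 1 + 1)) (x4 (m + 1 + 1)) -
        grad4f f (x1 (m + 1)) (x2 (m + 1)) (x3 (m + 1)) (x4 (m + 1))) +
      Matrix.toEuclideanLin H4 (x4 (m + 1 + 1) - x4 (m + 1)) +
      (-(Matrix.toEuclideanLin H4 (x4 (m + 1) - x4 m))) := by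
    rw [hw2 (m + 1), hw2 m]; abel
  have hq2 : ∀ v : E4 n, ‖Matrix.toEuclideanLin H2 v‖ ^ 2 = qf (H2ᵀ * H2) v :=
    fun v => (my_qf H2 v).symm
  have hq4 : ∀ v : E3 n, ‖Matrix.toEuclideanLin H4 v‖ ^ 2 = qf (H4ᵀ * H4) v :=
    fun v => (my_qf H4 v).symm
  have hC1 : ‖w1 (m + 1) - w1 m‖ ^ 2 ≤
      4 * (Lf ^ 2 * (‖x1 (m + 1 + 1) - x1 (m + 1)‖ ^ 2 + ‖x2 (m + 1 + 1) - x2 (m + 1)‖ ^ 2 +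
            ‖x3 (m + 1) - x3 m‖ ^ 2 + ‖x4 (m + 1) - x4 m‖ ^ 2) +
          Lg ^ 2 * (‖x1 (m + 1 + 1) - x1 (m + 1)‖ ^ 2 + ‖x2 (m + 1 + 1) - x2 (m + 1)‖ ^ 2) +
          qf (H2ᵀ * H2) (x2 (m + 1 + 1) - x2 (m + 1)) +
          qf (H2ᵀ * H2) (x2 (m + 1) - x2 m)) := by
    rw [hsplit1]
    refine le_trans (my_sq4 _ _ _ _) ?_
    rw [norm_neg, hq2, hq2]
    have h1 := hLf2 (x1 (m + 1 + 1)) (x2 (m + 1 + 1)) (x3 (m + 1)) (x4 (m + 1))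
      (x1 (m + 1)) (x2 (m + 1)) (x3 m) (x4 m)
    have h2 := hLg2 (x1 (m + 1 + 1)) (x2 (m + 1 + 1)) (x1 (m + 1)) (x2 (m + 1))
    linarith
  have hC2 : ‖w2 (m + 1) - w2 m‖ ^ 2 ≤
      3 * (Lf ^ 2 * (‖x1 (m + 1 + 1) - x1 (m + 1)‖ ^ 2 + ‖x2 (m + 1 + 1) - x2 (m + 1)‖ ^ 2 +
            ‖x3 (m + 1 + 1) - x3 (m + 1)‖ ^ 2 + ‖x4 (m + 1 + 1) - x4 (m + 1)‖ ^ 2) +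
          qf (H4ᵀ * H4) (x4 (m + 1 + 1) - x4 (m + 1)) +
          qf (H4ᵀ * H4) (x4 (m + 1) - x4 m)) := by
    rw [hsplit2]
    refine le_trans (my_sq3 _ _ _) ?_
    rw [norm_neg, hq4, hq4]
    have h1 := hLf4 (x1 (m + 1 + 1)) (x2 (m + 1 + 1)) (x3 (m + 1 + 1)) (x4 (m + 1 + 1))
      (x1 (m + 1)) (x2 (m + 1)) (x3 (m + 1)) (x4 (m + 1))
    linarith
  -- assemble
  set As := ‖l1 (m + 1 + 1) - l1 (m + 1)‖ ^ 2 + ‖l2 (m + 1 + 1) - l2 (m + 1)‖ ^ 2 with hAs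
  set Bs := ‖l1 (m + 1) - l1 m‖ ^ 2 + ‖l2 (m + 1) - l2 m‖ ^ 2 with hBs
  set BR := (7 * Lf ^ 2 + 4 * Lg ^ 2) * ‖x1 (m + 1 + 1) - x1 (m + 1)‖ ^ 2 +
      3 * Lf ^ 2 * ‖x3 (m + 1 + 1) - x3 (m + 1)‖ ^ 2 +
      4 * Lf ^ 2 * ‖x3 (m + 1) - x3 m‖ ^ 2 +
      ((7 * Lf ^ 2 + 4 * Lg ^ 2) * ‖x2 (m + 1 + 1) - x2 (m + 1)‖ ^ 2 +
        4 * qf (H2ᵀ * H2) (x2 (m + 1 + 1) - x2 (m + 1))) +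
      4 * qf (H2ᵀ * H2) (x2 (m + 1) - x2 m) +
      (3 * Lf ^ 2 * ‖x4 (m + 1 + 1) - x4 (m + 1)‖ ^ 2 +
        3 * qf (H4ᵀ * H4) (x4 (m + 1 + 1) - x4 (m + 1))) +
      (4 * Lf ^ 2 * ‖x4 (m + 1) - x4 m‖ ^ 2 +
        3 * qf (H4ᵀ * H4) (x4 (m + 1) - x4 m)) with hBR
  have hCsum : ‖w1 (m + 1) - w1 m‖ ^ 2 + ‖w2 (m + 1) - w2 m‖ ^ 2 ≤ BR := by
    rw [hBR]; linarith
  have hsum2 : (1 - θ) * As ≤ θ * (1 - θ) * Bs + τ ^ 2 * BR := by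
    have hmul := mul_le_mul_of_nonneg_left hCsum (sq_nonneg τ)
    rw [hAs, hBs]
    nlinarith [key1, key2]
  rw [hα1, hα2]
  have h1θ : (0:ℝ) < 1 - θ := by linarith
  have hfrac : θ / (1 - θ) * (Bs - As) + τ * (τ / (1 - θ) ^ 2) * BR =
      (θ * (1 - θ) * (Bs - As) + τ ^ 2 * BR) / (1 - θ) ^ 2 := by
    field_simp
  rw [hfrac, le_div_iff₀ (by positivity)]
  nlinarith [hsum2]

end
end

section
/- (Lyapunov recursion.) Under the stated assumptions, for every k the proximal ADMM iterates satisfy L_β(x^{k+1},λ^{k+1}) + (α₁/(τβ))‖Δλ^{k+1}‖² + Σᵢ₌₁⁴ ‖Δxᵢ^{k+1}‖²_{Mᵢ} ≤ L_β(x^k,λ^k) + (α₁/(τβ))‖Δλ^k‖² + Σᵢ₌₁⁴ ‖Δxᵢ^k‖²_{Nᵢ}. -/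
open scoped RealInnerProductSpace
open Matrix

noncomputable section

/-- The product of `n` unit spheres in `ℝ⁴`: each 4-coordinate block has norm 1. -/
def Msph (n : ℕ) : Set (E4 n) := {x | ∀ i : Fin n, ∑ j : Fin 4, x (i, j) ^ 2 = 1}

/-- The augmented Lagrangian
`L_β(x,λ) = f + g − ⟨λ₁, x₁−x₂⟩ − ⟨λ₂, x₃−x₄⟩ + (β/2)(‖x₁−x₂‖² + ‖x₃−x₄‖²)`. -/
def augL {n : ℕ} (f : E4 n → E4 n → E3 n → E3 n → ℝ) (g : E4 n → E4 n → ℝ) (β : ℝ)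
    (x1 x2 : E4 n) (x3 x4 : E3 n) (l1 : E4 n) (l2 : E3 n) : ℝ :=
  f x1 x2 x3 x4 + g x1 x2 - ⟪l1, x1 - x2⟫ - ⟪l2, x3 - x4⟫ +
    β / 2 * (‖x1 - x2‖ ^ 2 + ‖x3 - x4‖ ^ 2)


section stmt15Aux

open scoped RealInnerProductSpace
open Matrix

/-! ### Generic helper lemmas -/

variable {F : Type*} [NormedAddCommGroup F] [InnerProductSpace ℝ F] [CompleteSpace F]

private lemma hasFDerivAt_gradient_innerSL' {c : F → ℝ} {m : F} (h : DifferentiableAt ℝ c m) :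
    HasFDerivAt c (innerSL ℝ (gradient c m)) m := by
  have hg := hasGradientAt_iff_hasFDerivAt.mp h.hasGradientAt
  exact hg

omit [CompleteSpace F] in
private lemma hasFDerivAt_inner_right' (v m : F) :
    HasFDerivAt (fun y : F => ⟪v, y⟫) (innerSL ℝ v) m :=
  (innerSL ℝ v).hasFDerivAt

omit [CompleteSpace F] in
private lemma hasFDerivAt_normsq_sub' (w m : F) :
    HasFDerivAt (fun y : F => ‖w - y‖ ^ 2) (innerSL ℝ ((2:ℝ) • (m - w))) m := by
  have h1 : HasFDerivAt (fun y : F => w - y) (-(ContinuousLinearMap.id ℝ F)) m :=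
    (hasFDerivAt_id m).const_sub w
  have h2 := h1.inner ℝ h1
  have he : (fun y : F => ‖w - y‖ ^ 2) = fun y : F => ⟪w - y, w - y⟫ := by
    funext y; rw [real_inner_self_eq_norm_sq]
  rw [he]
  refine h2.congr_fderiv ?_
  ext u
  simp only [innerSL_apply_apply, ContinuousLinearMap.comp_apply, ContinuousLinearMap.prod_apply,
    ContinuousLinearMap.neg_apply, ContinuousLinearMap.id_apply, fderivInnerCLM_apply,
    inner_neg_right, inner_neg_left, inner_smul_left, inner_sub_left, inner_sub_right,
    RCLike.ofReal_real_eq_id, id_eq, map_ofNat]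
  have := real_inner_comm u (w - m)
  simp only [inner_sub_left, inner_sub_right] at this ⊢
  linarith

omit [CompleteSpace F] in
private lemma hasFDerivAt_quad' (Q : F →L[ℝ] F) (hQ : ∀ v w : F, ⟪Q v, w⟫ = ⟪v, Q w⟫) (x0 m : F) :
    HasFDerivAt (fun y : F => 1/2 * ⟪y - x0, Q (y - x0)⟫) (innerSL ℝ (Q (m - x0))) m := by
  have h1 : HasFDerivAt (fun y : F => y - x0) (ContinuousLinearMap.id ℝ F) m :=
    (hasFDerivAt_id m).sub_const x0
  have h2 : HasFDerivAt (fun y : F => Q (y - x0)) (Q.comp (ContinuousLinearMap.id ℝ F)) m :=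
    Q.hasFDerivAt.comp m h1
  have h3 := (h1.inner ℝ h2).const_mul (1/2 : ℝ)
  refine h3.congr_fderiv ?_
  ext u
  simp only [innerSL_apply_apply, ContinuousLinearMap.smul_apply, ContinuousLinearMap.comp_apply,
    ContinuousLinearMap.prod_apply, ContinuousLinearMap.id_apply, fderivInnerCLM_apply,
    smul_eq_mul]
  linarith [hQ (m - x0) u, real_inner_comm u (Q (m - x0))]

omit [CompleteSpace F] in
private lemma convex_tangent_le' (c : F → ℝ) (hc : ConvexOn ℝ Set.univ c) {m : F} {L : F →L[ℝ] ℝ}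
    (hG : HasFDerivAt c L m) (y : F) : c m + L (y - m) ≤ c y := by
  set v := y - m with hv
  have hder : HasDerivAt (fun t : ℝ => c (m + t • v)) (L v) 0 := by
    have hline : HasDerivAt (fun t : ℝ => m + t • v) v 0 := by
      simpa using ((hasDerivAt_id (0:ℝ)).smul_const v).const_add m
    have hG' : HasFDerivAt c L (m + (0:ℝ) • v) := by simpa using hG
    exact hG'.comp_hasDerivAt (x := (0:ℝ)) hline
  have hslope : ∀ t : ℝ, t ∈ Set.Ioo (0:ℝ) 1 → (c (m + t • v) - c m) / t ≤ c y - c m := by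
    intro t ht
    have hcx := hc.2 (Set.mem_univ m) (Set.mem_univ y)
      (show (0:ℝ) ≤ 1 - t by linarith [ht.2]) ht.1.le (by ring)
    have hpt : (1 - t) • m + t • y = m + t • v := by rw [hv]; module
    rw [hpt] at hcx
    rw [div_le_iff₀ ht.1]
    simp only [smul_eq_mul] at hcx
    nlinarith [hcx]
  have htend : Filter.Tendsto (fun t : ℝ => (c (m + t • v) - c m) / t)
      (nhdsWithin 0 (Set.Ioo (0:ℝ) 1)) (nhds (L v)) := by
    have h2 := hasDerivWithinAt_iff_tendsto_slope.mp (hder.hasDerivWithinAt (s := Set.Ioo (0:ℝ) 1))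
    have hmem : (0:ℝ) ∉ Set.Ioo (0:ℝ) 1 := by simp
    rw [Set.diff_singleton_eq_self (by simpa using hmem)] at h2
    refine h2.congr (fun t => ?_)
    simp [slope, vsub_eq_sub, div_eq_inv_mul]
  have hne : (nhdsWithin (0:ℝ) (Set.Ioo (0:ℝ) 1)).NeBot := by
    apply IsGLB.nhdsWithin_neBot
    · exact isGLB_Ioo one_pos
    · exact Set.nonempty_Ioo.mpr one_pos
  have hle : L v ≤ c y - c m := by
    refine le_of_tendsto htend ?_
    filter_upwards [self_mem_nhdsWithin] with t ht using hslope t ht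
  linarith

private lemma prox_key' (c : F → ℝ) (hc : ConvexOn ℝ Set.univ c) {m x0 : F} (G : F)
    (Q : F →L[ℝ] F)
    (hQ : ∀ v w : F, ⟪Q v, w⟫ = ⟪v, Q w⟫) (hG : HasFDerivAt c (innerSL ℝ G) m)
    (hm : ∀ y, c m + 1/2 * ⟪m - x0, Q (m - x0)⟫ ≤ c y + 1/2 * ⟪y - x0, Q (y - x0)⟫) :
    G + Q (m - x0) = 0 ∧ c m + ⟪m - x0, Q (m - x0)⟫ ≤ c x0 := by
  have hψ : HasFDerivAt (fun y : F => c y + 1/2 * ⟪y - x0, Q (y - x0)⟫)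
      (innerSL ℝ (G + Q (m - x0))) m := by
    have := hG.add (hasFDerivAt_quad' Q hQ x0 m)
    refine this.congr_fderiv ?_
    ext u
    simp [inner_add_left]
  have hloc : IsLocalMin (fun y : F => c y + 1/2 * ⟪y - x0, Q (y - x0)⟫) m :=
    Filter.Eventually.of_forall hm
  have h0 : innerSL ℝ (G + Q (m - x0)) = 0 := hloc.hasFDerivAt_eq_zero hψ
  have hz : G + Q (m - x0) = 0 := by
    have := congrArg (fun (L : F →L[ℝ] ℝ) => L (G + Q (m - x0))) h0
    simp only [innerSL_apply_apply, ContinuousLinearMap.zero_apply] at this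
    exact inner_self_eq_zero.mp this
  refine ⟨hz, ?_⟩
  have hct := convex_tangent_le' c hc hG x0
  have hGe : ⟪G, x0 - m⟫ = ⟪m - x0, Q (m - x0)⟫ := by
    have hG' : G = -(Q (m - x0)) := by rw [← neg_eq_of_add_eq_zero_left hz]
    rw [hG', inner_neg_left, ← inner_neg_right, show -(x0 - m) = m - x0 by module]
    exact hQ (m - x0) (m - x0)
  simp only [innerSL_apply_apply] at hct
  linarith [hct, hGe]

omit [CompleteSpace F] in
private lemma rest_convex' (v w : F) (r s : ℝ) (hs : 0 ≤ s) :
    ConvexOn ℝ Set.univ fun y : F => r + ⟪v, y⟫ + s * ‖w - y‖ ^ 2 := by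
  refine ⟨convex_univ, ?_⟩
  intro x _ y _ a b ha hb hab
  simp only [smul_eq_mul]
  have hinner : ⟪v, a • x + b • y⟫ = a * ⟪v, x⟫ + b * ⟪v, y⟫ := by
    rw [inner_add_right, real_inner_smul_right, real_inner_smul_right]
  have hw : w - (a • x + b • y) = a • (w - x) + b • (w - y) := by
    have h1 : a • (w - x) + b • (w - y) = (a + b) • w - (a • x + b • y) := by module
    rw [h1, hab, one_smul]
  have hn1 : ‖w - (a • x + b • y)‖ ≤ a * ‖w - x‖ + b * ‖w - y‖ := by
    rw [hw]
    calc ‖a • (w - x) + b • (w - y)‖ ≤ ‖a • (w - x)‖ + ‖b • (w - y)‖ := norm_add_le _ _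
    _ = a * ‖w - x‖ + b * ‖w - y‖ := by
        rw [norm_smul, norm_smul, Real.norm_eq_abs, Real.norm_eq_abs, abs_of_nonneg ha,
          abs_of_nonneg hb]
  have hsq : ‖w - (a • x + b • y)‖ ^ 2 ≤ a * ‖w - x‖ ^ 2 + b * ‖w - y‖ ^ 2 := by
    have h1 : (a * ‖w - x‖ + b * ‖w - y‖) ^ 2 ≤ a * ‖w - x‖ ^ 2 + b * ‖w - y‖ ^ 2 := by
      nlinarith [sq_nonneg (‖w - x‖ - ‖w - y‖), mul_nonneg ha hb, norm_nonneg (w - x),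
        norm_nonneg (w - y)]
    nlinarith [hn1, norm_nonneg (w - (a • x + b • y)), mul_nonneg ha (norm_nonneg (w - x)),
      mul_nonneg hb (norm_nonneg (w - y))]
  have hmul := mul_le_mul_of_nonneg_left hsq hs
  have hr : a * r + b * r = r := by rw [← add_mul, hab, one_mul]
  nlinarith [hmul, hinner, hr]

omit [CompleteSpace F] [InnerProductSpace ℝ F] in
private lemma solve_foc4 {V : Type*} [AddCommGroup V] [Module ℝ V] (β : ℝ) (A B L T x y : V)
    (h : A + B + L + β • (y - x) + T = 0) : L - β • (x - y) = -A - B - T := by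
  have h2 : L - β • (x - y) - (-A - B - T) = A + B + L + β • (y - x) + T := by module
  rw [h] at h2
  exact sub_eq_zero.mp h2

omit [CompleteSpace F] [InnerProductSpace ℝ F] in
private lemma solve_foc3 {V : Type*} [AddCommGroup V] [Module ℝ V] (β : ℝ) (A L T x y : V)
    (h : A + L + β • (y - x) + T = 0) : L - β • (x - y) = -A - T := by
  have h2 : L - β • (x - y) - (-A - T) = A + L + β • (y - x) + T := by module
  rw [h] at h2
  exact sub_eq_zero.mp h2

omit [CompleteSpace F] in
private lemma dual_norm_bound4 {τ σ : ℝ} (hτ : 0 ≤ τ) (hσ : σ = |1 - τ|)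
    (dnew dold Ap Bp Tp A B T : F)
    (h : dnew = (1 - τ) • dold + τ • ((-Ap - Bp - Tp) - (-A - B - T))) :
    ‖dnew‖ ≤ σ * ‖dold‖ + τ * (‖Ap - A‖ + ‖Bp - B‖ + ‖Tp‖ + ‖T‖) := by
  have hV : (-Ap - Bp - Tp) - (-A - B - T) = -((Ap - A) + (Bp - B) + Tp - T) := by module
  rw [h, hV]
  calc ‖(1 - τ) • dold + τ • -((Ap - A) + (Bp - B) + Tp - T)‖
      ≤ ‖(1 - τ) • dold‖ + ‖τ • -((Ap - A) + (Bp - B) + Tp - T)‖ := norm_add_le _ _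
    _ = σ * ‖dold‖ + τ * ‖(Ap - A) + (Bp - B) + Tp - T‖ := by
        rw [norm_smul, norm_smul, norm_neg, Real.norm_eq_abs, Real.norm_eq_abs,
          abs_of_nonneg hτ, hσ]
    _ ≤ σ * ‖dold‖ + τ * (‖Ap - A‖ + ‖Bp - B‖ + ‖Tp‖ + ‖T‖) := by
        have h1 : ‖(Ap - A) + (Bp - B) + Tp - T‖ ≤ ‖Ap - A‖ + ‖Bp - B‖ + ‖Tp‖ + ‖T‖ := by
          calc ‖(Ap - A) + (Bp - B) + Tp - T‖ ≤ ‖(Ap - A) + (Bp - B) + Tp‖ + ‖T‖ :=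
                norm_sub_le _ _
            _ ≤ ‖(Ap - A) + (Bp - B)‖ + ‖Tp‖ + ‖T‖ := by
                have := norm_add_le ((Ap - A) + (Bp - B)) Tp; linarith
            _ ≤ ‖Ap - A‖ + ‖Bp - B‖ + ‖Tp‖ + ‖T‖ := by
                have := norm_add_le (Ap - A) (Bp - B); linarith
        nlinarith [h1, hτ]

omit [CompleteSpace F] in
private lemma dual_norm_bound3 {τ σ : ℝ} (hτ : 0 ≤ τ) (hσ : σ = |1 - τ|)
    (dnew dold Ap Tp A T : F)
    (h : dnew = (1 - τ) • dold + τ • ((-Ap - Tp) - (-A - T))) :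
    ‖dnew‖ ≤ σ * ‖dold‖ + τ * (‖Ap - A‖ + ‖Tp‖ + ‖T‖) := by
  have hV : (-Ap - Tp) - (-A - T) = -((Ap - A) + Tp - T) := by module
  rw [h, hV]
  calc ‖(1 - τ) • dold + τ • -((Ap - A) + Tp - T)‖
      ≤ ‖(1 - τ) • dold‖ + ‖τ • -((Ap - A) + Tp - T)‖ := norm_add_le _ _
    _ = σ * ‖dold‖ + τ * ‖(Ap - A) + Tp - T‖ := by
        rw [norm_smul, norm_smul, norm_neg, Real.norm_eq_abs, Real.norm_eq_abs,
          abs_of_nonneg hτ, hσ]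
    _ ≤ σ * ‖dold‖ + τ * (‖Ap - A‖ + ‖Tp‖ + ‖T‖) := by
        have h1 : ‖(Ap - A) + Tp - T‖ ≤ ‖Ap - A‖ + ‖Tp‖ + ‖T‖ := by
          calc ‖(Ap - A) + Tp - T‖ ≤ ‖(Ap - A) + Tp‖ + ‖T‖ := norm_sub_le _ _
            _ ≤ ‖Ap - A‖ + ‖Tp‖ + ‖T‖ := by
                have := norm_add_le (Ap - A) Tp; linarith
        nlinarith [h1, hτ]

private lemma per_comp' (σ τ A B S : ℝ) (hσ0 : 0 ≤ σ) (hσ1 : σ < 1)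
    (hB : 0 ≤ B) (h : B ≤ σ * A + τ * S) :
    (1 - σ) * B ^ 2 ≤ σ * (1 - σ) * A ^ 2 + τ ^ 2 * S ^ 2 := by
  have hB2 : B ^ 2 ≤ (σ * A + τ * S) ^ 2 := by nlinarith
  nlinarith [sq_nonneg ((1 - σ) * A - τ * S), hB2]

private lemma scalar_key' (σ τ A1 A2 B1 B2 S1 S2 α1 α2 : ℝ) (hσ0 : 0 ≤ σ) (hσ1 : σ < 1)
    (hα1 : α1 = σ / (1 - σ)) (hα2 : α2 = τ / (1 - σ) ^ 2)
    (hB1 : 0 ≤ B1) (hB2 : 0 ≤ B2)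
    (h1 : B1 ≤ σ * A1 + τ * S1) (h2 : B2 ≤ σ * A2 + τ * S2) :
    (1 + α1) * (B1 ^ 2 + B2 ^ 2) ≤ α1 * (A1 ^ 2 + A2 ^ 2) + (τ * α2) * (S1 ^ 2 + S2 ^ 2) := by
  have hδ : (0:ℝ) < 1 - σ := by linarith
  have c1 := per_comp' σ τ A1 B1 S1 hσ0 hσ1 hB1 h1
  have c2 := per_comp' σ τ A2 B2 S2 hσ0 hσ1 hB2 h2
  have H : (1 - σ) * (B1^2 + B2^2) ≤ σ * (1 - σ) * (A1^2 + A2^2) + τ^2 * (S1^2 + S2^2) := by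
    nlinarith [c1, c2]
  rw [hα1, hα2]
  have key : ((1 + σ / (1 - σ)) * (B1 ^ 2 + B2 ^ 2) - (σ / (1 - σ)) * (A1 ^ 2 + A2 ^ 2)
      - (τ * (τ / (1 - σ) ^ 2)) * (S1 ^ 2 + S2 ^ 2)) * (1 - σ) ^ 2
      = (1 - σ) * (B1^2+B2^2) - σ * (1 - σ) * (A1^2+A2^2) - τ^2 * (S1^2+S2^2) := by
    field_simp
    ring
  nlinarith [key, H, mul_pos hδ hδ, hδ]

private lemma sqrt_le_imp' (S T L : ℝ) (hS : 0 ≤ S) (hT : 0 ≤ T)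
    (h : Real.sqrt S ≤ L * Real.sqrt T) : S ≤ L ^ 2 * T := by
  have h2 : Real.sqrt S ^ 2 ≤ (L * Real.sqrt T) ^ 2 :=
    pow_le_pow_left₀ (Real.sqrt_nonneg S) h 2
  rwa [Real.sq_sqrt hS, mul_pow, Real.sq_sqrt hT] at h2

private lemma sum4_sq' (a b c d : ℝ) : (a + b + c + d) ^ 2 ≤ 4 * (a^2 + b^2 + c^2 + d^2) := by
  nlinarith [sq_nonneg (a-b), sq_nonneg (a-c), sq_nonneg (a-d), sq_nonneg (b-c),
    sq_nonneg (b-d), sq_nonneg (c-d)]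

private lemma sum3_sq' (a b c : ℝ) : (a + b + c) ^ 2 ≤ 3 * (a^2 + b^2 + c^2) := by
  nlinarith [sq_nonneg (a-b), sq_nonneg (a-c), sq_nonneg (b-c)]

/-! ### Quadratic form lemmas -/

variable {ι : Type*} [Fintype ι] [DecidableEq ι]

private lemma qf_sub' (A B : Matrix ι ι ℝ) (v : EuclideanSpace ℝ ι) :
    qf (A - B) v = qf A v - qf B v := by
  simp [qf, map_sub, LinearMap.sub_apply, inner_sub_right]

private lemma qf_add' (A B : Matrix ι ι ℝ) (v : EuclideanSpace ℝ ι) :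
    qf (A + B) v = qf A v + qf B v := by
  simp [qf, map_add, LinearMap.add_apply, inner_add_right]

private lemma qf_smul' (c : ℝ) (A : Matrix ι ι ℝ) (v : EuclideanSpace ℝ ι) :
    qf (c • A) v = c * qf A v := by
  simp [qf, _root_.map_smul, LinearMap.smul_apply, inner_smul_right]

private lemma qf_one' (v : EuclideanSpace ℝ ι) : qf (1 : Matrix ι ι ℝ) v = ‖v‖ ^ 2 := by
  have : Matrix.toEuclideanLin (1 : Matrix ι ι ℝ) v = v := by
    simp [Matrix.toEuclideanLin_apply]
  rw [qf, this, real_inner_self_eq_norm_sq]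

private lemma qf_zero_vec' (A : Matrix ι ι ℝ) : qf A (0 : EuclideanSpace ℝ ι) = 0 := by
  simp [qf]

private lemma toEuclideanLin_mul_apply' (A B : Matrix ι ι ℝ) (v : EuclideanSpace ℝ ι) :
    Matrix.toEuclideanLin (A * B) v = Matrix.toEuclideanLin A (Matrix.toEuclideanLin B v) := by
  simp [Matrix.toEuclideanLin_apply, Matrix.mulVec_mulVec]

private lemma qf_HtH' {H : Matrix ι ι ℝ} (hH : H.IsHermitian) (v : EuclideanSpace ℝ ι) :
    qf (Hᵀ * H) v = ‖Matrix.toEuclideanLin H v‖ ^ 2 := by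
  have ht : Hᵀ = H := by
    have := hH
    rw [Matrix.IsHermitian, Matrix.conjTranspose] at this
    exact (Matrix.conjTranspose_eq_transpose_of_trivial H).symm.trans hH
  rw [qf, ht, toEuclideanLin_mul_apply']
  have hsym : (Matrix.toEuclideanLin H).IsSymmetric :=
    Matrix.isHermitian_iff_isSymmetric.mp hH
  rw [← hsym v (Matrix.toEuclideanLin H v), real_inner_self_eq_norm_sq]

end stmt15Aux

section stmt15Blocks
open scoped RealInnerProductSpace
open Matrix

private lemma block2' {n : ℕ} (f : E4 n → E4 n → E3 n → E3 n → ℝ) (g : E4 n → E4 n → ℝ)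
    (hf : ContDiff ℝ 1 fun p : (E4 n × E4 n) × E3 n × E3 n => f p.1.1 p.1.2 p.2.1 p.2.2)
    (hg : ContDiff ℝ 1 fun p : E4 n × E4 n => g p.1 p.2)
    (hfconv2 : ∀ (a : E4 n) (c d : E3 n), ConvexOn ℝ Set.univ fun y => f a y c d)
    (hgconv2 : ∀ a : E4 n, ConvexOn ℝ Set.univ fun y => g a y)
    (β : ℝ) (hβ : 0 < β)
    (H2 : Matrix (Fin n × Fin 4) (Fin n × Fin 4) ℝ) (hH2 : H2.IsHermitian)
    (x1v : E4 n) (x3v x4v : E3 n) (l1v : E4 n) (l2v : E3 n) (x2old m : E4 n)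
    (hmin : ∀ y : E4 n,
        augL f g β x1v m x3v x4v l1v l2v + 1 / 2 * qf H2 (m - x2old) ≤
          augL f g β x1v y x3v x4v l1v l2v + 1 / 2 * qf H2 (y - x2old)) :
    grad2f f x1v m x3v x4v + grad2g g x1v m + l1v + β • (m - x1v)
        + Matrix.toEuclideanLin H2 (m - x2old) = 0 ∧
      augL f g β x1v m x3v x4v l1v l2v + qf H2 (m - x2old) ≤
        augL f g β x1v x2old x3v x4v l1v l2v := by
  set r : ℝ := -⟪l1v, x1v⟫ - ⟪l2v, x3v - x4v⟫ + β / 2 * ‖x3v - x4v‖ ^ 2 with hr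
  have hce : (fun y : E4 n => augL f g β x1v y x3v x4v l1v l2v)
      = fun y : E4 n => (f x1v y x3v x4v + g x1v y) + (r + ⟪l1v, y⟫ + β / 2 * ‖x1v - y‖ ^ 2) := by
    funext y
    simp only [augL, hr, inner_sub_right]
    ring
  have hc : ConvexOn ℝ Set.univ (fun y : E4 n => augL f g β x1v y x3v x4v l1v l2v) := by
    rw [hce]
    exact ((hfconv2 x1v x3v x4v).add (hgconv2 x1v)).add
      (rest_convex' l1v x1v r (β / 2) (by positivity))
  have hdf : DifferentiableAt ℝ (fun y : E4 n => f x1v y x3v x4v) m := by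
    have hF : Differentiable ℝ
        (fun p : (E4 n × E4 n) × E3 n × E3 n => f p.1.1 p.1.2 p.2.1 p.2.2) :=
      hf.differentiable one_ne_zero
    have he : Differentiable ℝ (fun y : E4 n => ((x1v, y), (x3v, x4v))) := by fun_prop
    exact (hF ((x1v, m), (x3v, x4v))).comp m (he m)
  have hdg : DifferentiableAt ℝ (fun y : E4 n => g x1v y) m := by
    have hF : Differentiable ℝ (fun p : E4 n × E4 n => g p.1 p.2) := hg.differentiable one_ne_zero
    have he : Differentiable ℝ (fun y : E4 n => (x1v, y)) := by fun_prop
    exact (hF (x1v, m)).comp m (he m)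
  have hf2 : HasFDerivAt (fun y : E4 n => f x1v y x3v x4v)
      (innerSL ℝ (grad2f f x1v m x3v x4v)) m := hasFDerivAt_gradient_innerSL' hdf
  have hg2 : HasFDerivAt (fun y : E4 n => g x1v y)
      (innerSL ℝ (grad2g g x1v m)) m := hasFDerivAt_gradient_innerSL' hdg
  have hrest : HasFDerivAt (fun y : E4 n => r + ⟪l1v, y⟫ + β / 2 * ‖x1v - y‖ ^ 2)
      ((0 + innerSL ℝ l1v) + (β / 2) • innerSL ℝ ((2:ℝ) • (m - x1v))) m :=
    ((hasFDerivAt_const r m).add (hasFDerivAt_inner_right' l1v m)).add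
      ((hasFDerivAt_normsq_sub' x1v m).const_mul (β / 2))
  have hG : HasFDerivAt (fun y : E4 n => augL f g β x1v y x3v x4v l1v l2v)
      (innerSL ℝ (grad2f f x1v m x3v x4v + grad2g g x1v m + l1v + β • (m - x1v))) m := by
    rw [hce]
    have := (hf2.add hg2).add hrest
    refine this.congr_fderiv ?_
    ext u
    simp only [innerSL_apply_apply, ContinuousLinearMap.add_apply, ContinuousLinearMap.smul_apply,
      ContinuousLinearMap.zero_apply, inner_add_left, inner_smul_left, smul_eq_mul,
      RCLike.ofReal_real_eq_id, id_eq, real_inner_smul_left, starRingEnd_apply, star_trivial]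
    ring
  set Q : E4 n →L[ℝ] E4 n := (Matrix.toEuclideanLin H2).toContinuousLinearMap with hQdef
  have hQsym : ∀ v w : E4 n, ⟪Q v, w⟫ = ⟪v, Q w⟫ := fun v w =>
    (Matrix.isHermitian_iff_isSymmetric.mp hH2) v w
  have hm' : ∀ y : E4 n,
      (fun y : E4 n => augL f g β x1v y x3v x4v l1v l2v) m
          + 1/2 * ⟪m - x2old, Q (m - x2old)⟫ ≤
      (fun y : E4 n => augL f g β x1v y x3v x4v l1v l2v) y
          + 1/2 * ⟪y - x2old, Q (y - x2old)⟫ := by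
    intro y
    simpa [qf, hQdef] using hmin y
  have hk := prox_key' _ hc (grad2f f x1v m x3v x4v + grad2g g x1v m + l1v + β • (m - x1v))
    Q hQsym hG hm'
  exact ⟨hk.1, by simpa [qf, hQdef] using hk.2⟩

private lemma block3' {n : ℕ} (f : E4 n → E4 n → E3 n → E3 n → ℝ) (g : E4 n → E4 n → ℝ)
    (hf : ContDiff ℝ 1 fun p : (E4 n × E4 n) × E3 n × E3 n => f p.1.1 p.1.2 p.2.1 p.2.2)
    (hfconv3 : ∀ (a b : E4 n) (d : E3 n), ConvexOn ℝ Set.univ fun y => f a b y d)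
    (β : ℝ) (hβ : 0 < β)
    (H3 : Matrix (Fin n × Fin 3) (Fin n × Fin 3) ℝ) (hH3 : H3.IsHermitian)
    (x1v x2v : E4 n) (x4v : E3 n) (l1v : E4 n) (l2v : E3 n) (x3old m : E3 n)
    (hmin : ∀ y : E3 n,
        augL f g β x1v x2v m x4v l1v l2v + 1 / 2 * qf H3 (m - x3old) ≤
          augL f g β x1v x2v y x4v l1v l2v + 1 / 2 * qf H3 (y - x3old)) :
    grad3f f x1v x2v m x4v - l2v + β • (m - x4v)
        + Matrix.toEuclideanLin H3 (m - x3old) = 0 ∧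
      augL f g β x1v x2v m x4v l1v l2v + qf H3 (m - x3old) ≤
        augL f g β x1v x2v x3old x4v l1v l2v := by
  set r : ℝ := g x1v x2v - ⟪l1v, x1v - x2v⟫ + ⟪l2v, x4v⟫ + β / 2 * ‖x1v - x2v‖ ^ 2 with hr
  have hce : (fun y : E3 n => augL f g β x1v x2v y x4v l1v l2v)
      = fun y : E3 n => f x1v x2v y x4v + (r + ⟪-l2v, y⟫ + β / 2 * ‖x4v - y‖ ^ 2) := by
    funext y
    simp only [augL, hr, inner_sub_right, inner_neg_left, norm_sub_rev x4v y]
    ring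
  have hc : ConvexOn ℝ Set.univ (fun y : E3 n => augL f g β x1v x2v y x4v l1v l2v) := by
    rw [hce]
    exact (hfconv3 x1v x2v x4v).add (rest_convex' (-l2v) x4v r (β / 2) (by positivity))
  have hdf : DifferentiableAt ℝ (fun y : E3 n => f x1v x2v y x4v) m := by
    have hF : Differentiable ℝ
        (fun p : (E4 n × E4 n) × E3 n × E3 n => f p.1.1 p.1.2 p.2.1 p.2.2) :=
      hf.differentiable one_ne_zero
    have he : Differentiable ℝ (fun y : E3 n => ((x1v, x2v), (y, x4v))) := by fun_prop
    exact (hF ((x1v, x2v), (m, x4v))).comp m (he m)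
  have hf3 : HasFDerivAt (fun y : E3 n => f x1v x2v y x4v)
      (innerSL ℝ (grad3f f x1v x2v m x4v)) m := hasFDerivAt_gradient_innerSL' hdf
  have hrest : HasFDerivAt (fun y : E3 n => r + ⟪-l2v, y⟫ + β / 2 * ‖x4v - y‖ ^ 2)
      ((0 + innerSL ℝ (-l2v)) + (β / 2) • innerSL ℝ ((2:ℝ) • (m - x4v))) m :=
    ((hasFDerivAt_const r m).add (hasFDerivAt_inner_right' (-l2v) m)).add
      ((hasFDerivAt_normsq_sub' x4v m).const_mul (β / 2))
  have hG : HasFDerivAt (fun y : E3 n => augL f g β x1v x2v y x4v l1v l2v)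
      (innerSL ℝ (grad3f f x1v x2v m x4v - l2v + β • (m - x4v))) m := by
    rw [hce]
    have := hf3.add hrest
    refine this.congr_fderiv ?_
    ext u
    simp only [innerSL_apply_apply, ContinuousLinearMap.add_apply, ContinuousLinearMap.smul_apply,
      ContinuousLinearMap.zero_apply, inner_add_left, inner_sub_left, inner_neg_left,
      inner_smul_left, smul_eq_mul, RCLike.ofReal_real_eq_id, id_eq, real_inner_smul_left,
      starRingEnd_apply, star_trivial]
    ring
  set Q : E3 n →L[ℝ] E3 n := (Matrix.toEuclideanLin H3).toContinuousLinearMap with hQdef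
  have hQsym : ∀ v w : E3 n, ⟪Q v, w⟫ = ⟪v, Q w⟫ := fun v w =>
    (Matrix.isHermitian_iff_isSymmetric.mp hH3) v w
  have hm' : ∀ y : E3 n,
      (fun y : E3 n => augL f g β x1v x2v y x4v l1v l2v) m
          + 1/2 * ⟪m - x3old, Q (m - x3old)⟫ ≤
      (fun y : E3 n => augL f g β x1v x2v y x4v l1v l2v) y
          + 1/2 * ⟪y - x3old, Q (y - x3old)⟫ := by
    intro y
    simpa [qf, hQdef] using hmin y
  have hk := prox_key' _ hc (grad3f f x1v x2v m x4v - l2v + β • (m - x4v)) Q hQsym hG hm'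
  exact ⟨hk.1, by simpa [qf, hQdef] using hk.2⟩

private lemma block4' {n : ℕ} (f : E4 n → E4 n → E3 n → E3 n → ℝ) (g : E4 n → E4 n → ℝ)
    (hf : ContDiff ℝ 1 fun p : (E4 n × E4 n) × E3 n × E3 n => f p.1.1 p.1.2 p.2.1 p.2.2)
    (hfconv4 : ∀ (a b : E4 n) (c : E3 n), ConvexOn ℝ Set.univ fun y => f a b c y)
    (β : ℝ) (hβ : 0 < β)
    (H4 : Matrix (Fin n × Fin 3) (Fin n × Fin 3) ℝ) (hH4 : H4.IsHermitian)
    (x1v x2v : E4 n) (x3v : E3 n) (l1v : E4 n) (l2v : E3 n) (x4old m : E3 n)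
    (hmin : ∀ y : E3 n,
        augL f g β x1v x2v x3v m l1v l2v + 1 / 2 * qf H4 (m - x4old) ≤
          augL f g β x1v x2v x3v y l1v l2v + 1 / 2 * qf H4 (y - x4old)) :
    grad4f f x1v x2v x3v m + l2v + β • (m - x3v)
        + Matrix.toEuclideanLin H4 (m - x4old) = 0 ∧
      augL f g β x1v x2v x3v m l1v l2v + qf H4 (m - x4old) ≤
        augL f g β x1v x2v x3v x4old l1v l2v := by
  set r : ℝ := g x1v x2v - ⟪l1v, x1v - x2v⟫ - ⟪l2v, x3v⟫ + β / 2 * ‖x1v - x2v‖ ^ 2 with hr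
  have hce : (fun y : E3 n => augL f g β x1v x2v x3v y l1v l2v)
      = fun y : E3 n => f x1v x2v x3v y + (r + ⟪l2v, y⟫ + β / 2 * ‖x3v - y‖ ^ 2) := by
    funext y
    simp only [augL, hr, inner_sub_right]
    ring
  have hc : ConvexOn ℝ Set.univ (fun y : E3 n => augL f g β x1v x2v x3v y l1v l2v) := by
    rw [hce]
    exact (hfconv4 x1v x2v x3v).add (rest_convex' l2v x3v r (β / 2) (by positivity))
  have hdf : DifferentiableAt ℝ (fun y : E3 n => f x1v x2v x3v y) m := by
    have hF : Differentiable ℝ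
        (fun p : (E4 n × E4 n) × E3 n × E3 n => f p.1.1 p.1.2 p.2.1 p.2.2) :=
      hf.differentiable one_ne_zero
    have he : Differentiable ℝ (fun y : E3 n => ((x1v, x2v), (x3v, y))) := by fun_prop
    show DifferentiableAt ℝ ((fun p : (E4 n × E4 n) × E3 n × E3 n => f p.1.1 p.1.2 p.2.1 p.2.2) ∘ (fun y : E3 n => ((x1v, x2v), (x3v, y)))) m
    exact (hF ((x1v, x2v), (x3v, m))).comp m (he m)
  have hf4 : HasFDerivAt (fun y : E3 n => f x1v x2v x3v y)
      (innerSL ℝ (grad4f f x1v x2v x3v m)) m := hasFDerivAt_gradient_innerSL' hdf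
  have hrest : HasFDerivAt (fun y : E3 n => r + ⟪l2v, y⟫ + β / 2 * ‖x3v - y‖ ^ 2)
      ((0 + innerSL ℝ l2v) + (β / 2) • innerSL ℝ ((2:ℝ) • (m - x3v))) m :=
    ((hasFDerivAt_const r m).add (hasFDerivAt_inner_right' l2v m)).add
      ((hasFDerivAt_normsq_sub' x3v m).const_mul (β / 2))
  have hG : HasFDerivAt (fun y : E3 n => augL f g β x1v x2v x3v y l1v l2v)
      (innerSL ℝ (grad4f f x1v x2v x3v m + l2v + β • (m - x3v))) m := by
    rw [hce]
    have := hf4.add hrest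
    refine this.congr_fderiv ?_
    ext u
    simp only [innerSL_apply_apply, ContinuousLinearMap.add_apply, ContinuousLinearMap.smul_apply,
      ContinuousLinearMap.zero_apply, inner_add_left, inner_smul_left, smul_eq_mul,
      RCLike.ofReal_real_eq_id, id_eq, real_inner_smul_left, starRingEnd_apply, star_trivial]
    ring
  set Q : E3 n →L[ℝ] E3 n := (Matrix.toEuclideanLin H4).toContinuousLinearMap with hQdef
  have hQsym : ∀ v w : E3 n, ⟪Q v, w⟫ = ⟪v, Q w⟫ := fun v w =>
    (Matrix.isHermitian_iff_isSymmetric.mp hH4) v w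
  have hm' : ∀ y : E3 n,
      (fun y : E3 n => augL f g β x1v x2v x3v y l1v l2v) m
          + 1/2 * ⟪m - x4old, Q (m - x4old)⟫ ≤
      (fun y : E3 n => augL f g β x1v x2v x3v y l1v l2v) y
          + 1/2 * ⟪y - x4old, Q (y - x4old)⟫ := by
    intro y
    simpa [qf, hQdef] using hmin y
  have hk := prox_key' _ hc (grad4f f x1v x2v x3v m + l2v + β • (m - x3v)) Q hQsym hG hm'
  exact ⟨hk.1, by simpa [qf, hQdef] using hk.2⟩

end stmt15Blocks

set_option maxHeartbeats 4000000 in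
/-- Lemma 5.3 (Lyapunov recursion): for every `k ≥ 1`,
`L_β(x^{k+1},λ^{k+1}) + (α₁/(τβ))‖Δλ^{k+1}‖² + Σᵢ‖Δxᵢ^{k+1}‖²_{Mᵢ}
  ≤ L_β(x^k,λ^k) + (α₁/(τβ))‖Δλ^k‖² + Σᵢ‖Δxᵢ^k‖²_{Nᵢ}`. -/
theorem stmt15 (n : ℕ)
    (f : E4 n → E4 n → E3 n → E3 n → ℝ) (g : E4 n → E4 n → ℝ)
    (hf : ContDiff ℝ 1 fun p : (E4 n × E4 n) × E3 n × E3 n => f p.1.1 p.1.2 p.2.1 p.2.2)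
    (hg : ContDiff ℝ 1 fun p : E4 n × E4 n => g p.1 p.2)
    (Lf Lg : ℝ) (hLf : 0 < Lf) (hLg : 0 < Lg)
    (hfLip : ∀ a b : E4 n, ∀ c d : E3 n, ∀ a' b' : E4 n, ∀ c' d' : E3 n,
        Real.sqrt (‖grad1f f a b c d - grad1f f a' b' c' d'‖ ^ 2 +
            ‖grad2f f a b c d - grad2f f a' b' c' d'‖ ^ 2 +
            ‖grad3f f a b c d - grad3f f a' b' c' d'‖ ^ 2 +
            ‖grad4f f a b c d - grad4f f a' b' c' d'‖ ^ 2) ≤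
          Lf * Real.sqrt (‖a - a'‖ ^ 2 + ‖b - b'‖ ^ 2 + ‖c - c'‖ ^ 2 + ‖d - d'‖ ^ 2))
    (hgLip : ∀ a b a' b' : E4 n,
        Real.sqrt (‖grad1g g a b - grad1g g a' b'‖ ^ 2 +
            ‖grad2g g a b - grad2g g a' b'‖ ^ 2) ≤
          Lg * Real.sqrt (‖a - a'‖ ^ 2 + ‖b - b'‖ ^ 2))
    (hfconv1 : ∀ (b : E4 n) (c d : E3 n), ConvexOn ℝ Set.univ fun y => f y b c d)
    (hfconv2 : ∀ (a : E4 n) (c d : E3 n), ConvexOn ℝ Set.univ fun y => f a y c d)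
    (hfconv3 : ∀ (a b : E4 n) (d : E3 n), ConvexOn ℝ Set.univ fun y => f a b y d)
    (hfconv4 : ∀ (a b : E4 n) (c : E3 n), ConvexOn ℝ Set.univ fun y => f a b c y)
    (hgconv1 : ∀ b : E4 n, ConvexOn ℝ Set.univ fun y => g y b)
    (hgconv2 : ∀ a : E4 n, ConvexOn ℝ Set.univ fun y => g a y)
    (β τ : ℝ) (hβ : 0 < β) (hτ : τ ∈ Set.Ioo (0 : ℝ) 2)
    (H1 H2 : Matrix (Fin n × Fin 4) (Fin n × Fin 4) ℝ)
    (H3 H4 : Matrix (Fin n × Fin 3) (Fin n × Fin 3) ℝ)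
    (hH1 : H1.PosDef) (hH2 : H2.PosDef) (hH3 : H3.PosDef) (hH4 : H4.PosDef)
    (x1 x2 : ℕ → E4 n) (x3 x4 : ℕ → E3 n)
    (l1 : ℕ → E4 n) (l2 : ℕ → E3 n)
    (hbdd : ∃ R : ℝ, ∀ k, ‖x1 k‖ ≤ R ∧ ‖x2 k‖ ≤ R ∧ ‖x3 k‖ ≤ R ∧ ‖x4 k‖ ≤ R ∧
        ‖l1 k‖ ≤ R ∧ ‖l2 k‖ ≤ R)
    (hx1M : ∀ k, x1 k ∈ Msph n)
    (hmin1 : ∀ k, ∀ y ∈ Msph n,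
        augL f g β (x1 (k + 1)) (x2 k) (x3 k) (x4 k) (l1 k) (l2 k) +
            1 / 2 * qf H1 (x1 (k + 1) - x1 k) ≤
          augL f g β y (x2 k) (x3 k) (x4 k) (l1 k) (l2 k) + 1 / 2 * qf H1 (y - x1 k))
    (hmin2 : ∀ k, ∀ y : E4 n,
        augL f g β (x1 (k + 1)) (x2 (k + 1)) (x3 k) (x4 k) (l1 k) (l2 k) +
            1 / 2 * qf H2 (x2 (k + 1) - x2 k) ≤
          augL f g β (x1 (k + 1)) y (x3 k) (x4 k) (l1 k) (l2 k) + 1 / 2 * qf H2 (y - x2 k))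
    (hmin3 : ∀ k, ∀ y : E3 n,
        augL f g β (x1 (k + 1)) (x2 (k + 1)) (x3 (k + 1)) (x4 k) (l1 k) (l2 k) +
            1 / 2 * qf H3 (x3 (k + 1) - x3 k) ≤
          augL f g β (x1 (k + 1)) (x2 (k + 1)) y (x4 k) (l1 k) (l2 k) +
            1 / 2 * qf H3 (y - x3 k))
    (hmin4 : ∀ k, ∀ y : E3 n,
        augL f g β (x1 (k + 1)) (x2 (k + 1)) (x3 (k + 1)) (x4 (k + 1)) (l1 k) (l2 k) +
            1 / 2 * qf H4 (x4 (k + 1) - x4 k) ≤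
          augL f g β (x1 (k + 1)) (x2 (k + 1)) (x3 (k + 1)) y (l1 k) (l2 k) +
            1 / 2 * qf H4 (y - x4 k))
    (hdual1 : ∀ k, l1 (k + 1) = l1 k - (τ * β) • (x1 (k + 1) - x2 (k + 1)))
    (hdual2 : ∀ k, l2 (k + 1) = l2 k - (τ * β) • (x3 (k + 1) - x4 (k + 1)))
    (α1 α2 : ℝ)
    (hα1 : α1 = |1 - τ| / (1 - |1 - τ|))
    (hα2 : α2 = τ / (1 - |1 - τ|) ^ 2)
    (M1 M2 N2 : Matrix (Fin n × Fin 4) (Fin n × Fin 4) ℝ)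
    (M3 M4 N3 N4 : Matrix (Fin n × Fin 3) (Fin n × Fin 3) ℝ)
    (hM1 : M1 = (1 / 2 : ℝ) • H1 - (α2 / β * (7 * Lf ^ 2 + 4 * Lg ^ 2)) • 1)
    (hM2 : M2 = H2 - (α2 / β) • ((7 * Lf ^ 2 + 4 * Lg ^ 2) • 1 + (4 : ℝ) • (H2ᵀ * H2)))
    (hM3 : M3 = H3 - (3 * α2 / β * Lf ^ 2) • 1)
    (hM4 : M4 = H4 - (α2 / β) • ((3 * Lf ^ 2) • 1 + (3 : ℝ) • (H4ᵀ * H4)))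
    (hN2 : N2 = (4 * α2 / β) • (H2ᵀ * H2))
    (hN3 : N3 = (4 * α2 / β * Lf ^ 2) • 1)
    (hN4 : N4 = (α2 / β) • ((4 * Lf ^ 2) • 1 + (3 : ℝ) • (H4ᵀ * H4))) :
    ∀ k, 1 ≤ k →
      augL f g β (x1 (k + 1)) (x2 (k + 1)) (x3 (k + 1)) (x4 (k + 1))
            (l1 (k + 1)) (l2 (k + 1)) +
          α1 / (τ * β) * (‖l1 (k + 1) - l1 k‖ ^ 2 + ‖l2 (k + 1) - l2 k‖ ^ 2) +
          (qf M1 (x1 (k + 1) - x1 k) + qf M2 (x2 (k + 1) - x2 k) +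
            qf M3 (x3 (k + 1) - x3 k) + qf M4 (x4 (k + 1) - x4 k)) ≤
        augL f g β (x1 k) (x2 k) (x3 k) (x4 k) (l1 k) (l2 k) +
          α1 / (τ * β) * (‖l1 k - l1 (k - 1)‖ ^ 2 + ‖l2 k - l2 (k - 1)‖ ^ 2) +
          (0 + qf N2 (x2 k - x2 (k - 1)) +
            qf N3 (x3 k - x3 (k - 1)) + qf N4 (x4 k - x4 (k - 1))) := by
  intro k hk
  obtain ⟨j, rfl⟩ : ∃ j, k = j + 1 := ⟨k - 1, (Nat.succ_pred_eq_of_pos hk).symm⟩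
  simp only [Nat.add_sub_cancel]
  have hτ0 : 0 < τ := hτ.1
  have hτ2 : τ < 2 := hτ.2
  have hβτ : 0 < τ * β := mul_pos hτ0 hβ
  have hβτ' : τ * β ≠ 0 := ne_of_gt hβτ
  have hβ' : β ≠ 0 := ne_of_gt hβ
  have hτ' : τ ≠ 0 := ne_of_gt hτ0
  set σ := |1 - τ| with hσdef
  have hσ0 : 0 ≤ σ := abs_nonneg _
  have hσ1 : σ < 1 := by
    rw [hσdef, abs_lt]; constructor <;> linarith
  have hδ : (0:ℝ) < 1 - σ := by linarith
  have hα2pos : 0 < α2 := by rw [hα2]; exact div_pos hτ0 (pow_pos hδ 2)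
  -- block subproblem results
  have hb2 := fun i => block2' f g hf hg hfconv2 hgconv2 β hβ H2 hH2.1
    (x1 (i + 1)) (x3 i) (x4 i) (l1 i) (l2 i) (x2 i) (x2 (i + 1)) (hmin2 i)
  have hb3 := fun i => block3' f g hf hfconv3 β hβ H3 hH3.1
    (x1 (i + 1)) (x2 (i + 1)) (x4 i) (l1 i) (l2 i) (x3 i) (x3 (i + 1)) (hmin3 i)
  have hb4 := fun i => block4' f g hf hfconv4 β hβ H4 hH4.1
    (x1 (i + 1)) (x2 (i + 1)) (x3 (i + 1)) (l1 i) (l2 i) (x4 i) (x4 (i + 1)) (hmin4 i)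
  -- first-order conditions rearranged
  have hu1 : ∀ i, l1 i - β • (x1 (i + 1) - x2 (i + 1)) =
      -grad2f f (x1 (i + 1)) (x2 (i + 1)) (x3 i) (x4 i) - grad2g g (x1 (i + 1)) (x2 (i + 1))
        - Matrix.toEuclideanLin H2 (x2 (i + 1) - x2 i) := fun i =>
    solve_foc4 β _ _ _ _ _ _ ((hb2 i).1)
  have hu2 : ∀ i, l2 i - β • (x3 (i + 1) - x4 (i + 1)) =
      -grad4f f (x1 (i + 1)) (x2 (i + 1)) (x3 (i + 1)) (x4 (i + 1))
        - Matrix.toEuclideanLin H4 (x4 (i + 1) - x4 i) := fun i =>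
    solve_foc3 β _ _ _ _ _ ((hb4 i).1)
  -- dual difference recursions
  have hdl1 : l1 (j + 1 + 1) - l1 (j + 1) = (1 - τ) • (l1 (j + 1) - l1 j) +
      τ • ((l1 (j + 1) - β • (x1 (j + 1 + 1) - x2 (j + 1 + 1)))
        - (l1 j - β • (x1 (j + 1) - x2 (j + 1)))) := by
    rw [hdual1 (j + 1), hdual1 j]; module
  have hdl2 : l2 (j + 1 + 1) - l2 (j + 1) = (1 - τ) • (l2 (j + 1) - l2 j) +
      τ • ((l2 (j + 1) - β • (x3 (j + 1 + 1) - x4 (j + 1 + 1)))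
        - (l2 j - β • (x3 (j + 1) - x4 (j + 1)))) := by
    rw [hdual2 (j + 1), hdual2 j]; module
  rw [hu1 (j + 1), hu1 j] at hdl1
  rw [hu2 (j + 1), hu2 j] at hdl2
  have hn1 : ‖l1 (j + 1 + 1) - l1 (j + 1)‖ ≤ σ * ‖l1 (j + 1) - l1 j‖ + τ * (‖grad2f f (x1 (j + 1 + 1)) (x2 (j + 1 + 1)) (x3 (j + 1)) (x4 (j + 1)) - (grad2f f (x1 (j + 1)) (x2 (j + 1)) (x3 j) (x4 j))‖ + ‖grad2g g (x1 (j + 1 + 1)) (x2 (j + 1 + 1)) - grad2g g (x1 (j + 1)) (x2 (j + 1))‖ + ‖Matrix.toEuclideanLin H2 (x2 (j + 1 + 1) - x2 (j + 1))‖ + ‖Matrix.toEuclideanLin H2 (x2 (j + 1) - x2 j)‖) :=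
    dual_norm_bound4 hτ0.le hσdef _ _ _ _ _ _ _ _ hdl1
  have hn2 : ‖l2 (j + 1 + 1) - l2 (j + 1)‖ ≤ σ * ‖l2 (j + 1) - l2 j‖ + τ * (‖grad4f f (x1 (j + 1 + 1)) (x2 (j + 1 + 1)) (x3 (j + 1 + 1)) (x4 (j + 1 + 1)) - grad4f f (x1 (j + 1)) (x2 (j + 1)) (x3 (j + 1)) (x4 (j + 1))‖ + ‖Matrix.toEuclideanLin H4 (x4 (j + 1 + 1) - x4 (j + 1))‖ + ‖Matrix.toEuclideanLin H4 (x4 (j + 1) - x4 j)‖) :=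
    dual_norm_bound3 hτ0.le hσdef _ _ _ _ _ _ hdl2
  -- Lipschitz bounds
  have hLf2 : ‖grad2f f (x1 (j + 1 + 1)) (x2 (j + 1 + 1)) (x3 (j + 1)) (x4 (j + 1)) - (grad2f f (x1 (j + 1)) (x2 (j + 1)) (x3 j) (x4 j))‖ ^ 2 ≤ Lf ^ 2 * (‖x1 (j + 1 + 1) - x1 (j + 1)‖ ^ 2 + ‖x2 (j + 1 + 1) - x2 (j + 1)‖ ^ 2 + ‖x3 (j + 1) - x3 j‖ ^ 2 + ‖x4 (j + 1) - x4 j‖ ^ 2) := by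
    have h := hfLip (x1 (j + 1 + 1)) (x2 (j + 1 + 1)) (x3 (j + 1)) (x4 (j + 1))
      (x1 (j + 1)) (x2 (j + 1)) (x3 j) (x4 j)
    have hs := sqrt_le_imp' _ _ Lf (by positivity) (by positivity) h
    have n1 := sq_nonneg ‖grad1f f (x1 (j + 1 + 1)) (x2 (j + 1 + 1)) (x3 (j + 1)) (x4 (j + 1)) -
      grad1f f (x1 (j + 1)) (x2 (j + 1)) (x3 j) (x4 j)‖
    have n3 := sq_nonneg ‖grad3f f (x1 (j + 1 + 1)) (x2 (j + 1 + 1)) (x3 (j + 1)) (x4 (j + 1)) -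
      grad3f f (x1 (j + 1)) (x2 (j + 1)) (x3 j) (x4 j)‖
    have n4 := sq_nonneg ‖grad4f f (x1 (j + 1 + 1)) (x2 (j + 1 + 1)) (x3 (j + 1)) (x4 (j + 1)) -
      grad4f f (x1 (j + 1)) (x2 (j + 1)) (x3 j) (x4 j)‖
    linarith [hs, n1, n3, n4]
  have hLf4 : ‖grad4f f (x1 (j + 1 + 1)) (x2 (j + 1 + 1)) (x3 (j + 1 + 1)) (x4 (j + 1 + 1)) - grad4f f (x1 (j + 1)) (x2 (j + 1)) (x3 (j + 1)) (x4 (j + 1))‖ ^ 2 ≤ Lf ^ 2 * (‖x1 (j + 1 + 1) - x1 (j + 1)‖ ^ 2 + ‖x2 (j + 1 + 1) - x2 (j + 1)‖ ^ 2 + ‖x3 (j + 1 + 1) - x3 (j + 1)‖ ^ 2 + ‖x4 (j + 1 + 1) - x4 (j + 1)‖ ^ 2) := by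
    have h := hfLip (x1 (j + 1 + 1)) (x2 (j + 1 + 1)) (x3 (j + 1 + 1)) (x4 (j + 1 + 1))
      (x1 (j + 1)) (x2 (j + 1)) (x3 (j + 1)) (x4 (j + 1))
    have hs := sqrt_le_imp' _ _ Lf (by positivity) (by positivity) h
    have n1 := sq_nonneg ‖grad1f f (x1 (j + 1 + 1)) (x2 (j + 1 + 1)) (x3 (j + 1 + 1)) (x4 (j + 1 + 1)) -
      grad1f f (x1 (j + 1)) (x2 (j + 1)) (x3 (j + 1)) (x4 (j + 1))‖
    have n2 := sq_nonneg ‖grad2f f (x1 (j + 1 + 1)) (x2 (j + 1 + 1)) (x3 (j + 1 + 1)) (x4 (j + 1 + 1)) -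
      grad2f f (x1 (j + 1)) (x2 (j + 1)) (x3 (j + 1)) (x4 (j + 1))‖
    have n3 := sq_nonneg ‖grad3f f (x1 (j + 1 + 1)) (x2 (j + 1 + 1)) (x3 (j + 1 + 1)) (x4 (j + 1 + 1)) -
      grad3f f (x1 (j + 1)) (x2 (j + 1)) (x3 (j + 1)) (x4 (j + 1))‖
    linarith [hs, n1, n2, n3]
  have hLg2 : ‖grad2g g (x1 (j + 1 + 1)) (x2 (j + 1 + 1)) - grad2g g (x1 (j + 1)) (x2 (j + 1))‖ ^ 2 ≤ Lg ^ 2 * (‖x1 (j + 1 + 1) - x1 (j + 1)‖ ^ 2 + ‖x2 (j + 1 + 1) - x2 (j + 1)‖ ^ 2) := by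
    have h := hgLip (x1 (j + 1 + 1)) (x2 (j + 1 + 1)) (x1 (j + 1)) (x2 (j + 1))
    have hs := sqrt_le_imp' _ _ Lg (by positivity) (by positivity) h
    have n1 := sq_nonneg ‖grad1g g (x1 (j + 1 + 1)) (x2 (j + 1 + 1)) -
      grad1g g (x1 (j + 1)) (x2 (j + 1))‖
    linarith [hs, n1]
  -- bound on S1^2 + S2^2
  have hBIG : (‖grad2f f (x1 (j + 1 + 1)) (x2 (j + 1 + 1)) (x3 (j + 1)) (x4 (j + 1)) - (grad2f f (x1 (j + 1)) (x2 (j + 1)) (x3 j) (x4 j))‖ + ‖grad2g g (x1 (j + 1 + 1)) (x2 (j + 1 + 1)) - grad2g g (x1 (j + 1)) (x2 (j + 1))‖ + ‖Matrix.toEuclideanLin H2 (x2 (j + 1 + 1) - x2 (j + 1))‖ + ‖Matrix.toEuclideanLin H2 (x2 (j + 1) - x2 j)‖) ^ 2 + (‖grad4f f (x1 (j + 1 + 1)) (x2 (j + 1 + 1)) (x3 (j + 1 + 1)) (x4 (j + 1 + 1)) - grad4f f (x1 (j + 1)) (x2 (j + 1)) (x3 (j + 1)) (x4 (j + 1))‖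 + ‖Matrix.toEuclideanLin H4 (x4 (j + 1 + 1) - x4 (j + 1))‖ + ‖Matrix.toEuclideanLin H4 (x4 (j + 1) - x4 j)‖) ^ 2 ≤ (7 * Lf ^ 2 * ‖x1 (j + 1 + 1) - x1 (j + 1)‖ ^ 2 + 4 * Lg ^ 2 * ‖x1 (j + 1 + 1) - x1 (j + 1)‖ ^ 2 + 7 * Lf ^ 2 * ‖x2 (j + 1 + 1) - x2 (j + 1)‖ ^ 2 + 4 * Lg ^ 2 * ‖x2 (j + 1 + 1) - x2 (j + 1)‖ ^ 2 + 4 * ‖Matrix.toEuclideanLin H2 (x2 (j + 1 + 1) - x2 (j + 1))‖ ^ 2 + 3 * Lf ^ 2 * ‖x3 (j + 1 + 1) - x3 (j + 1)‖ ^ 2 + 3 * Lf ^ 2 * ‖x4 (j + 1 + 1) - x4 (j + 1)‖ ^ 2 + 3 * ‖Matrix.toEuclideanLin H4 (x4 (j + 1 + 1) - x4 (j + 1))‖ ^ 2 + 4 * ‖Matrix.toEuclideanLin H2 (x2 (j + 1) - x2 j)‖ ^ 2 + 4 * Lf ^ 2 * ‖x3 (j + 1) - x3 j‖ ^ 2 +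 4 * Lf ^ 2 * ‖x4 (j + 1) - x4 j‖ ^ 2 + 3 * ‖Matrix.toEuclideanLin H4 (x4 (j + 1) - x4 j)‖ ^ 2) := by
    have h4 := sum4_sq' ‖grad2f f (x1 (j + 1 + 1)) (x2 (j + 1 + 1)) (x3 (j + 1)) (x4 (j + 1)) - (grad2f f (x1 (j + 1)) (x2 (j + 1)) (x3 j) (x4 j))‖ ‖grad2g g (x1 (j + 1 + 1)) (x2 (j + 1 + 1)) - grad2g g (x1 (j + 1)) (x2 (j + 1))‖ ‖Matrix.toEuclideanLin H2 (x2 (j + 1 + 1) - x2 (j + 1))‖ ‖Matrix.toEuclideanLin H2 (x2 (j + 1) - x2 j)‖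
    have h3 := sum3_sq' ‖grad4f f (x1 (j + 1 + 1)) (x2 (j + 1 + 1)) (x3 (j + 1 + 1)) (x4 (j + 1 + 1)) - grad4f f (x1 (j + 1)) (x2 (j + 1)) (x3 (j + 1)) (x4 (j + 1))‖ ‖Matrix.toEuclideanLin H4 (x4 (j + 1 + 1) - x4 (j + 1))‖ ‖Matrix.toEuclideanLin H4 (x4 (j + 1) - x4 j)‖
    linarith [h4, h3, hLf2, hLg2, hLf4]
  -- key scalar inequality
  have hKEY : (1 + α1) * (‖l1 (j + 1 + 1) - l1 (j + 1)‖ ^ 2 + ‖l2 (j + 1 + 1) - l2 (j + 1)‖ ^ 2) ≤ α1 * (‖l1 (j + 1) - l1 j‖ ^ 2 + ‖l2 (j + 1) - l2 j‖ ^ 2) + (τ * α2) * ((‖grad2f f (x1 (j + 1 + 1)) (x2 (j + 1 + 1)) (x3 (j + 1)) (x4 (j + 1)) - (grad2f f (x1 (j + 1)) (x2 (j + 1)) (x3 j) (x4 j))‖ + ‖grad2g g (x1 (j + 1 + 1)) (x2 (j + 1 + 1)) - grad2g g (x1 (j + 1)) (x2 (j + 1))‖ + ‖Matrix.toEuclideanLin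 H2 (x2 (j + 1 + 1) - x2 (j + 1))‖ + ‖Matrix.toEuclideanLin H2 (x2 (j + 1) - x2 j)‖) ^ 2 + (‖grad4f f (x1 (j + 1 + 1)) (x2 (j + 1 + 1)) (x3 (j + 1 + 1)) (x4 (j + 1 + 1)) - grad4f f (x1 (j + 1)) (x2 (j + 1)) (x3 (j + 1)) (x4 (j + 1))‖ + ‖Matrix.toEuclideanLin H4 (x4 (j + 1 + 1) - x4 (j + 1))‖ + ‖Matrix.toEuclideanLin H4 (x4 (j + 1) - x4 j)‖) ^ 2) :=
    scalar_key' σ τ ‖l1 (j + 1) - l1 j‖ ‖l2 (j + 1) - l2 j‖ ‖l1 (j + 1 + 1) - l1 (j + 1)‖ ‖l2 (j + 1 + 1) - l2 (j + 1)‖ (‖grad2f f (x1 (j + 1 + 1)) (x2 (j + 1 + 1)) (x3 (j + 1)) (x4 (j + 1)) - (grad2f f (x1 (j + 1)) (x2 (j + 1)) (x3 j) (x4 j))‖ + ‖grad2g g (x1 (j + 1 + 1)) (x2 (j + 1 + 1)) - grad2g g (x1 (j + 1)) (x2 (j + 1))‖ + ‖Matrix.toEuclideanLin H2 (x2 (j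 + 1 + 1) - x2 (j + 1))‖ + ‖Matrix.toEuclideanLin H2 (x2 (j + 1) - x2 j)‖) (‖grad4f f (x1 (j + 1 + 1)) (x2 (j + 1 + 1)) (x3 (j + 1 + 1)) (x4 (j + 1 + 1)) - grad4f f (x1 (j + 1)) (x2 (j + 1)) (x3 (j + 1)) (x4 (j + 1))‖ + ‖Matrix.toEuclideanLin H4 (x4 (j + 1 + 1) - x4 (j + 1))‖ + ‖Matrix.toEuclideanLin H4 (x4 (j + 1) - x4 j)‖) α1 α2 hσ0 hσ1 hα1 hα2
      (norm_nonneg _) (norm_nonneg _) hn1 hn2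
  have hstep : (1 + α1) * (‖l1 (j + 1 + 1) - l1 (j + 1)‖ ^ 2 + ‖l2 (j + 1 + 1) - l2 (j + 1)‖ ^ 2) ≤ α1 * (‖l1 (j + 1) - l1 j‖ ^ 2 + ‖l2 (j + 1) - l2 j‖ ^ 2) + (τ * α2) * (7 * Lf ^ 2 * ‖x1 (j + 1 + 1) - x1 (j + 1)‖ ^ 2 + 4 * Lg ^ 2 * ‖x1 (j + 1 + 1) - x1 (j + 1)‖ ^ 2 + 7 * Lf ^ 2 * ‖x2 (j + 1 + 1) - x2 (j + 1)‖ ^ 2 + 4 * Lg ^ 2 * ‖x2 (j + 1 + 1) - x2 (j + 1)‖ ^ 2 + 4 * ‖Matrix.toEuclideanLin H2 (x2 (j + 1 + 1) - x2 (j + 1))‖ ^ 2 + 3 * Lf ^ 2 * ‖x3 (j + 1 + 1) - x3 (j + 1)‖ ^ 2 + 3 * Lf ^ 2 * ‖x4 (j + 1 + 1) - x4 (j + 1)‖ ^ 2 + 3 * ‖Matrix.toEuclideanLin H4 (x4 (j + 1 + 1) - x4 (j + 1))‖ ^ 2 + 4 * ‖Matrix.toEuclideanLin H2 (x2 (j +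 1) - x2 j)‖ ^ 2 + 4 * Lf ^ 2 * ‖x3 (j + 1) - x3 j‖ ^ 2 + 4 * Lf ^ 2 * ‖x4 (j + 1) - x4 j‖ ^ 2 + 3 * ‖Matrix.toEuclideanLin H4 (x4 (j + 1) - x4 j)‖ ^ 2) := by
    have hmono := mul_le_mul_of_nonneg_left hBIG (mul_nonneg hτ0.le hα2pos.le)
    linarith [hKEY, hmono]
  have hFIN : 1 / (τ * β) * (‖l1 (j + 1 + 1) - l1 (j + 1)‖ ^ 2 + ‖l2 (j + 1 + 1) - l2 (j + 1)‖ ^ 2) + α1 / (τ * β) * (‖l1 (j + 1 + 1) - l1 (j + 1)‖ ^ 2 + ‖l2 (j + 1 + 1) - l2 (j + 1)‖ ^ 2) ≤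
      α1 / (τ * β) * (‖l1 (j + 1) - l1 j‖ ^ 2 + ‖l2 (j + 1) - l2 j‖ ^ 2) + α2 / β * (7 * Lf ^ 2 * ‖x1 (j + 1 + 1) - x1 (j + 1)‖ ^ 2 + 4 * Lg ^ 2 * ‖x1 (j + 1 + 1) - x1 (j + 1)‖ ^ 2 + 7 * Lf ^ 2 * ‖x2 (j + 1 + 1) - x2 (j + 1)‖ ^ 2 + 4 * Lg ^ 2 * ‖x2 (j + 1 + 1) - x2 (j + 1)‖ ^ 2 + 4 * ‖Matrix.toEuclideanLin H2 (x2 (j + 1 + 1) - x2 (j + 1))‖ ^ 2 + 3 * Lf ^ 2 * ‖x3 (j + 1 + 1) - x3 (j + 1)‖ ^ 2 + 3 * Lf ^ 2 * ‖x4 (j + 1 + 1) - x4 (j + 1)‖ ^ 2 + 3 * ‖Matrix.toEuclideanLin H4 (x4 (j + 1 + 1) - x4 (j + 1))‖ ^ 2 + 4 * ‖Matrix.toEuclideanLin H2 (x2 (j + 1) - x2 j)‖ ^ 2 + 4 * Lf ^ 2 * ‖x3 (j + 1) - x3 j‖ ^ 2 + 4 * Lf ^ 2 * ‖x4 (j +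 1) - x4 j‖ ^ 2 + 3 * ‖Matrix.toEuclideanLin H4 (x4 (j + 1) - x4 j)‖ ^ 2) := by
    have h3 := mul_le_mul_of_nonneg_left hstep (one_div_nonneg.mpr hβτ.le)
    have e1 : 1 / (τ * β) * ((1 + α1) * (‖l1 (j + 1 + 1) - l1 (j + 1)‖ ^ 2 + ‖l2 (j + 1 + 1) - l2 (j + 1)‖ ^ 2)) =
        1 / (τ * β) * (‖l1 (j + 1 + 1) - l1 (j + 1)‖ ^ 2 + ‖l2 (j + 1 + 1) - l2 (j + 1)‖ ^ 2) + α1 / (τ * β) * (‖l1 (j + 1 + 1) - l1 (j + 1)‖ ^ 2 + ‖l2 (j + 1 + 1) - l2 (j + 1)‖ ^ 2) := by ring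
    have e2 : 1 / (τ * β) * (α1 * (‖l1 (j + 1) - l1 j‖ ^ 2 + ‖l2 (j + 1) - l2 j‖ ^ 2) + (τ * α2) * (7 * Lf ^ 2 * ‖x1 (j + 1 + 1) - x1 (j + 1)‖ ^ 2 + 4 * Lg ^ 2 * ‖x1 (j + 1 + 1) - x1 (j + 1)‖ ^ 2 + 7 * Lf ^ 2 * ‖x2 (j + 1 + 1) - x2 (j + 1)‖ ^ 2 + 4 * Lg ^ 2 * ‖x2 (j + 1 + 1) - x2 (j + 1)‖ ^ 2 + 4 * ‖Matrix.toEuclideanLin H2 (x2 (j + 1 + 1) - x2 (j + 1))‖ ^ 2 + 3 * Lf ^ 2 * ‖x3 (j + 1 + 1) - x3 (j + 1)‖ ^ 2 + 3 * Lf ^ 2 * ‖x4 (j + 1 + 1) - x4 (j + 1)‖ ^ 2 + 3 * ‖Matrix.toEuclideanLin H4 (x4 (j + 1 + 1) - x4 (j + 1))‖ ^ 2 + 4 * ‖Matrix.toEuclideanLin H2 (x2 (j + 1) - x2 j)‖ ^ 2 + 4 * Lf ^ 2 * ‖x3 (j + 1) - x3 j‖ ^ 2 + 4 * Lf ^ 2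 * ‖x4 (j + 1) - x4 j‖ ^ 2 + 3 * ‖Matrix.toEuclideanLin H4 (x4 (j + 1) - x4 j)‖ ^ 2)) =
        α1 / (τ * β) * (‖l1 (j + 1) - l1 j‖ ^ 2 + ‖l2 (j + 1) - l2 j‖ ^ 2) + α2 / β * (7 * Lf ^ 2 * ‖x1 (j + 1 + 1) - x1 (j + 1)‖ ^ 2 + 4 * Lg ^ 2 * ‖x1 (j + 1 + 1) - x1 (j + 1)‖ ^ 2 + 7 * Lf ^ 2 * ‖x2 (j + 1 + 1) - x2 (j + 1)‖ ^ 2 + 4 * Lg ^ 2 * ‖x2 (j + 1 + 1) - x2 (j + 1)‖ ^ 2 + 4 * ‖Matrix.toEuclideanLin H2 (x2 (j + 1 + 1) - x2 (j + 1))‖ ^ 2 + 3 * Lf ^ 2 * ‖x3 (j + 1 + 1) - x3 (j + 1)‖ ^ 2 + 3 * Lf ^ 2 * ‖x4 (j + 1 + 1) - x4 (j + 1)‖ ^ 2 + 3 * ‖Matrix.toEuclideanLin H4 (x4 (j + 1 + 1) - x4 (j + 1))‖ ^ 2 + 4 * ‖Matrix.toEuclideanLin H2 (x2 (j + 1) -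 x2 j)‖ ^ 2 + 4 * Lf ^ 2 * ‖x3 (j + 1) - x3 j‖ ^ 2 + 4 * Lf ^ 2 * ‖x4 (j + 1) - x4 j‖ ^ 2 + 3 * ‖Matrix.toEuclideanLin H4 (x4 (j + 1) - x4 j)‖ ^ 2) := by
      field_simp
    linarith [h3, e1.le, e1.ge, e2.le, e2.ge]
  -- descent chain
  have hd1 : augL f g β (x1 (j + 1 + 1)) (x2 (j + 1)) (x3 (j + 1)) (x4 (j + 1)) (l1 (j + 1))
      (l2 (j + 1)) + 1 / 2 * qf H1 (x1 (j + 1 + 1) - x1 (j + 1)) ≤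
      augL f g β (x1 (j + 1)) (x2 (j + 1)) (x3 (j + 1)) (x4 (j + 1)) (l1 (j + 1))
        (l2 (j + 1)) := by
    have h := hmin1 (j + 1) (x1 (j + 1)) (hx1M (j + 1))
    simpa [sub_self, qf_zero_vec'] using h
  have hd2 := (hb2 (j + 1)).2
  have hd3 := (hb3 (j + 1)).2
  have hd4 := (hb4 (j + 1)).2
  -- dual update identity for the augmented Lagrangian
  have hR1 : ⟪l1 (j + 1 + 1), x1 (j + 1 + 1) - x2 (j + 1 + 1)⟫ = ⟪l1 (j + 1), x1 (j + 1 + 1) - x2 (j + 1 + 1)⟫ - τ * β * ‖x1 (j + 1 + 1) - x2 (j + 1 + 1)‖ ^ 2 := by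
    rw [hdual1 (j + 1), inner_sub_left, real_inner_smul_left, real_inner_self_eq_norm_sq]
  have hR2 : ⟪l2 (j + 1 + 1), x3 (j + 1 + 1) - x4 (j + 1 + 1)⟫ = ⟪l2 (j + 1), x3 (j + 1 + 1) - x4 (j + 1 + 1)⟫ - τ * β * ‖x3 (j + 1 + 1) - x4 (j + 1 + 1)‖ ^ 2 := by
    rw [hdual2 (j + 1), inner_sub_left, real_inner_smul_left, real_inner_self_eq_norm_sq]
  have he1 : ‖l1 (j + 1 + 1) - l1 (j + 1)‖ ^ 2 = (τ * β) ^ 2 * ‖x1 (j + 1 + 1) - x2 (j + 1 + 1)‖ ^ 2 := by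
    have hv : l1 (j + 1 + 1) - l1 (j + 1) = -((τ * β) • (x1 (j + 1 + 1) - x2 (j + 1 + 1))) := by
      rw [hdual1 (j + 1)]; module
    rw [hv, norm_neg, norm_smul, Real.norm_eq_abs, abs_of_pos hβτ, mul_pow]
  have he2 : ‖l2 (j + 1 + 1) - l2 (j + 1)‖ ^ 2 = (τ * β) ^ 2 * ‖x3 (j + 1 + 1) - x4 (j + 1 + 1)‖ ^ 2 := by
    have hv : l2 (j + 1 + 1) - l2 (j + 1) = -((τ * β) • (x3 (j + 1 + 1) - x4 (j + 1 + 1))) := by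
      rw [hdual2 (j + 1)]; module
    rw [hv, norm_neg, norm_smul, Real.norm_eq_abs, abs_of_pos hβτ, mul_pow]
  have hF2 : augL f g β (x1 (j + 1 + 1)) (x2 (j + 1 + 1)) (x3 (j + 1 + 1)) (x4 (j + 1 + 1))
      (l1 (j + 1 + 1)) (l2 (j + 1 + 1)) =
      augL f g β (x1 (j + 1 + 1)) (x2 (j + 1 + 1)) (x3 (j + 1 + 1)) (x4 (j + 1 + 1))
        (l1 (j + 1)) (l2 (j + 1)) + 1 / (τ * β) * (‖l1 (j + 1 + 1) - l1 (j + 1)‖ ^ 2 + ‖l2 (j + 1 + 1) - l2 (j + 1)‖ ^ 2) := by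
    simp only [augL]
    rw [hR1, hR2, he1, he2]
    field_simp
    ring
  -- put everything together
  rw [hM1, hM2, hM3, hM4, hN2, hN3, hN4, hF2]
  simp only [qf_sub', qf_add', qf_smul', qf_one', qf_HtH' hH2.1, qf_HtH' hH4.1]
  ring_nf at hFIN hd1 hd2 hd3 hd4 ⊢
  linarith [hFIN, hd1, hd2, hd3, hd4]

end
end
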